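/- arXiv:2010.06586 — 9 statements merged into one kernel-verified Lean document; each statement's English description precedes it below -/
import Mathlib

section
/- The Hankel determinant of the shifted Catalan numbers det_{0≤i,j≤n-1}(C_{i+j+4}) equals (4/(3!·5!))·(n+1)(n+2)^2(n+3)(2n+3)(2n+5) for every positive integer n. -/
noncomputable def bq (k : ℕ) : ℚ := 2 + 6 / (((k : ℚ) + 2) * ((k : ℚ) + 3))

noncomputable def gq (k : ℕ) : ℚ :=
  ((k : ℚ) * ((k : ℚ) + 4) * (2 * (k : ℚ) + 1) * (2 * (k : ℚ) + 7)) /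
    (((k : ℚ) + 2) ^ 2 * (2 * (k : ℚ) + 3) * (2 * (k : ℚ) + 5))

noncomputable def Dq (k : ℕ) : ℚ :=
  (((k : ℚ) + 3) * ((k : ℚ) + 4) * (2 * (k : ℚ) + 7)) /
    (((k : ℚ) + 1) * ((k : ℚ) + 2) * (2 * (k : ℚ) + 3))

noncomputable def Fq (m k : ℕ) : ℚ :=
  if k ≤ m then
    (((2*m+8).choose (m - k) : ℚ) *
      (((k:ℚ)+1) * ((k:ℚ)+2) * ((k:ℚ)+(m:ℚ)+6) * ((k:ℚ)+(m:ℚ)+7) * ((k:ℚ)+(m:ℚ)+8))) /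
      (4 * (2*(k:ℚ)+7) * ((m:ℚ)+1) * ((m:ℚ)+2) * ((m:ℚ)+3) * ((m:ℚ)+4))
  else 0

lemma choose_ratio (n r : ℕ) (h : r < n) :
    ((n.choose (r+1) : ℚ)) * ((r:ℚ)+1) = (n.choose r : ℚ) * ((n:ℚ) - (r:ℚ)) := by
  have h2 := Nat.choose_succ_right_eq n r
  calc ((n.choose (r+1) : ℚ)) * ((r:ℚ)+1) = ((n.choose (r+1) * (r+1) : ℕ) : ℚ) := by
        push_cast; ring
    _ = ((n.choose r * (n - r) : ℕ) : ℚ) := by rw [h2]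
    _ = (n.choose r : ℚ) * ((n:ℚ) - (r:ℚ)) := by push_cast [Nat.cast_sub h.le]; ring

lemma pascal2 (n r : ℕ) :
    ((n+2).choose (r+2)) = n.choose r + 2 * (n.choose (r+1)) + n.choose (r+2) := by
  rw [Nat.choose_succ_succ (n+1) (r+1), Nat.choose_succ_succ n r, Nat.choose_succ_succ n (r+1)]
  ring

lemma Fq_of_lt {m k : ℕ} (h : m < k) : Fq m k = 0 := by
  unfold Fq; rw [if_neg (by omega)]

lemma Fq_diag (m : ℕ) : Fq m m = 1 := by
  unfold Fq
  rw [if_pos le_rfl, Nat.sub_self, Nat.choose_zero_right]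
  rw [div_eq_one_iff_eq (by positivity)]
  push_cast; ring

lemma Fq_rec_k0 (r : ℕ) :
    Fq (r+2) 0 = bq 0 * Fq (r+1) 0 + gq 1 * Fq (r+1) 1 := by
  unfold Fq bq gq
  rw [if_pos (by omega), if_pos (by omega), if_pos (by omega)]
  have s1 : (r+2) - 0 = r+2 := by omega
  have s2 : (r+1) - 0 = r+1 := by omega
  have s3 : (r+1) - 1 = r := by omega
  have s4 : 2*(r+2)+8 = (2*r+10)+2 := by omega
  have s5 : 2*(r+1)+8 = 2*r+10 := by omega
  rw [s1, s2, s3, s4, s5, pascal2 (2*r+10) r]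
  have e1 := choose_ratio (2*r+10) r (by omega)
  have e2 := choose_ratio (2*r+10) (r+1) (by omega)
  rw [show r+1+1 = r+2 by omega] at e2
  push_cast at e1 e2 ⊢
  have hr1 : ((r:ℚ)+1) ≠ 0 := by positivity
  have hr2 : ((r:ℚ)+2) ≠ 0 := by positivity
  have hc2 : ((2*r+10).choose (r+2) : ℚ) =
      ((2*r+10).choose (r+1) : ℚ) * ((r:ℚ)+9) / ((r:ℚ)+2) := by
    field_simp; linear_combination e2
  have hc1 : ((2*r+10).choose (r+1) : ℚ) =
      ((2*r+10).choose r : ℚ) * ((r:ℚ)+10) / ((r:ℚ)+1) := by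
    field_simp; linear_combination e1
  rw [hc2, hc1]
  have h6 : ((r:ℚ)+3) ≠ 0 := by positivity
  have h7 : ((r:ℚ)+4) ≠ 0 := by positivity
  have h8 : ((r:ℚ)+5) ≠ 0 := by positivity
  have h9 : ((r:ℚ)+6) ≠ 0 := by positivity
  field_simp
  ring

set_option maxHeartbeats 4000000 in
lemma Fq_rec_gen (x r : ℕ) :
    Fq (x+r+3) (x+1) =
      Fq (x+r+2) x + bq (x+1) * Fq (x+r+2) (x+1) + gq (x+2) * Fq (x+r+2) (x+2) := by
  unfold Fq bq gq
  rw [if_pos (by omega), if_pos (by omega), if_pos (by omega), if_pos (by omega)]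
  have s1 : (x+r+3) - (x+1) = r+2 := by omega
  have s2 : (x+r+2) - x = r+2 := by omega
  have s3 : (x+r+2) - (x+1) = r+1 := by omega
  have s4 : (x+r+2) - (x+2) = r := by omega
  have s5 : 2*(x+r+3)+8 = (2*x+2*r+12)+2 := by omega
  have s6 : 2*(x+r+2)+8 = 2*x+2*r+12 := by omega
  rw [s1, s2, s3, s4, s5, s6, pascal2 (2*x+2*r+12) r]
  have e1 := choose_ratio (2*x+2*r+12) r (by omega)
  have e2 := choose_ratio (2*x+2*r+12) (r+1) (by omega)
  rw [show r+1+1 = r+2 by omega] at e2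
  push_cast at e1 e2 ⊢
  have hr1 : ((r:ℚ)+1) ≠ 0 := by positivity
  have hr2 : ((r:ℚ)+2) ≠ 0 := by positivity
  have hc2 : ((2*x+2*r+12).choose (r+2) : ℚ) =
      ((2*x+2*r+12).choose (r+1) : ℚ) * (2*(x:ℚ)+(r:ℚ)+11) / ((r:ℚ)+2) := by
    field_simp; linear_combination e2
  have hc1 : ((2*x+2*r+12).choose (r+1) : ℚ) =
      ((2*x+2*r+12).choose r : ℚ) * (2*(x:ℚ)+(r:ℚ)+12) / ((r:ℚ)+1) := by
    field_simp; linear_combination e1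
  rw [hc2, hc1]
  have n1 : ((x:ℚ)+3) ≠ 0 := by positivity
  have n2 : ((x:ℚ)+4) ≠ 0 := by positivity
  have n3 : (2*(x:ℚ)+7) ≠ 0 := by positivity
  have n4 : (2*(x:ℚ)+9) ≠ 0 := by positivity
  have n5 : (2*(x:ℚ)+11) ≠ 0 := by positivity
  have n6 : ((x:ℚ)+(r:ℚ)+3) ≠ 0 := by positivity
  have n7 : ((x:ℚ)+(r:ℚ)+4) ≠ 0 := by positivity
  have n8 : ((x:ℚ)+(r:ℚ)+5) ≠ 0 := by positivity
  have n9 : ((x:ℚ)+(r:ℚ)+6) ≠ 0 := by positivity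
  have n10 : ((x:ℚ)+(r:ℚ)+7) ≠ 0 := by positivity
  field_simp
  ring

lemma Fq_rec_diag (s : ℕ) :
    Fq (s+2) (s+1) =
      Fq (s+1) s + bq (s+1) * Fq (s+1) (s+1) + gq (s+2) * Fq (s+1) (s+2) := by
  rw [Fq_of_lt (show s+1 < s+2 by omega), Fq_diag (s+1)]
  unfold Fq bq gq
  rw [if_pos (by omega), if_pos (by omega)]
  have s1 : (s+2) - (s+1) = 1 := by omega
  have s2 : (s+1) - s = 1 := by omega
  rw [s1, s2, Nat.choose_one_right, Nat.choose_one_right]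
  push_cast
  have n1 : ((s:ℚ)+2) ≠ 0 := by positivity
  have n2 : ((s:ℚ)+3) ≠ 0 := by positivity
  have n3 : ((s:ℚ)+4) ≠ 0 := by positivity
  have n4 : ((s:ℚ)+5) ≠ 0 := by positivity
  have n5 : ((s:ℚ)+6) ≠ 0 := by positivity
  have n6 : (2*(s:ℚ)+7) ≠ 0 := by positivity
  have n7 : (2*(s:ℚ)+9) ≠ 0 := by positivity
  field_simp
  ring

noncomputable def G : ℕ → ℕ → ℚ
  | 0, k => if k = 0 then 1 else 0
  | (m+1), k => (if k = 0 then 0 else G m (k - 1)) + bq k * G m k + gq (k+1) * G m (k+1)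

lemma G_eq_Fq : ∀ m k, G m k = Fq m k := by
  intro m
  induction m with
  | zero =>
    intro k
    cases k with
    | zero => rw [show G 0 0 = 1 from rfl, Fq_diag]
    | succ k => rw [show G 0 (k+1) = 0 from rfl, Fq_of_lt (show 0 < k+1 by omega)]
  | succ m ih =>
    intro k
    show (if k = 0 then 0 else G m (k - 1)) + bq k * G m k + gq (k+1) * G m (k+1) = Fq (m+1) k
    cases k with
    | zero =>
      rw [if_pos rfl, ih, ih]
      cases m with
      | zero =>
        unfold Fq bq gq
        norm_num
      | succ r =>
        rw [Fq_rec_k0 r]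
        ring
    | succ x =>
      rw [if_neg (Nat.succ_ne_zero x), Nat.add_sub_cancel, ih, ih, ih]
      rcases Nat.lt_trichotomy x m with hx | hx | hx
      · rcases Nat.eq_or_lt_of_le hx with hx2 | hx2
        · subst hx2
          have h := Fq_rec_diag x
          rw [show x+2 = x+1+1 by omega] at h
          linarith [h]
        · obtain ⟨r, rfl⟩ : ∃ r, m = x+r+2 := ⟨m-x-2, by omega⟩
          have h := Fq_rec_gen x r
          rw [show x+r+3 = x+r+2+1 by omega] at h
          linarith [h]
      · subst hx
        rw [Fq_of_lt (show x < x+1 by omega), Fq_of_lt (show x < x+2 by omega),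
          Fq_diag x, Fq_diag (x+1)]
        ring
      · rw [Fq_of_lt (show m < x by omega), Fq_of_lt (show m < x+1 by omega),
          Fq_of_lt (show m < x+2 by omega), Fq_of_lt (show m+1 < x+1 by omega)]
        ring

lemma G_zero {m k : ℕ} (h : m < k) : G m k = 0 := by rw [G_eq_Fq]; exact Fq_of_lt h

lemma Dq_mul_gq (k : ℕ) : gq (k+1) * Dq k = Dq (k+1) := by
  unfold Dq gq
  have h1 : ((k:ℚ)+1) ≠ 0 := by positivity
  have h2 : ((k:ℚ)+2) ≠ 0 := by positivity
  have h3 : ((k:ℚ)+3) ≠ 0 := by positivity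
  have h4 : (2*(k:ℚ)+3) ≠ 0 := by positivity
  have h5 : (2*(k:ℚ)+5) ≠ 0 := by positivity
  have h6 : (2*(k:ℚ)+7) ≠ 0 := by positivity
  push_cast
  field_simp
  ring

lemma transfer (a b K' : ℕ) (hK : a + 1 ≤ K') :
    ∑ k ∈ Finset.range (K'+1), G (a+1) k * Dq k * G b k
      = ∑ k ∈ Finset.range (K'+1), G a k * Dq k * G (b+1) k := by
  have hL : ∀ k, G (a+1) k * Dq k * G b k
      = ((if k = 0 then 0 else G a (k-1) * Dq k * G b k)
          + bq k * G a k * Dq k * G b k) + G a (k+1) * Dq (k+1) * G b k := by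
    intro k
    have h : G (a+1) k = (if k = 0 then 0 else G a (k-1)) + bq k * G a k
        + gq (k+1) * G a (k+1) := rfl
    rw [h, ← Dq_mul_gq k]
    split <;> ring
  have hR : ∀ k, G a k * Dq k * G (b+1) k
      = ((if k = 0 then 0 else G a k * Dq k * G b (k-1))
          + bq k * G a k * Dq k * G b k) + G a k * Dq (k+1) * G b (k+1) := by
    intro k
    have h : G (b+1) k = (if k = 0 then 0 else G b (k-1)) + bq k * G b k
        + gq (k+1) * G b (k+1) := rfl
    rw [h, ← Dq_mul_gq k]
    split <;> ring
  simp only [hL, hR]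
  rw [Finset.sum_add_distrib, Finset.sum_add_distrib, Finset.sum_add_distrib,
    Finset.sum_add_distrib]
  have A1 : ∑ k ∈ Finset.range (K'+1), (if k = 0 then 0 else G a (k-1) * Dq k * G b k)
      = ∑ k ∈ Finset.range K', G a k * Dq (k+1) * G b (k+1) := by
    rw [Finset.sum_range_succ']
    simp
  have B1 : ∑ k ∈ Finset.range (K'+1), (if k = 0 then 0 else G a k * Dq k * G b (k-1))
      = ∑ k ∈ Finset.range K', G a (k+1) * Dq (k+1) * G b k := by
    rw [Finset.sum_range_succ']
    simp
  have A3 : ∑ k ∈ Finset.range (K'+1), G a (k+1) * Dq (k+1) * G b k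
      = ∑ k ∈ Finset.range K', G a (k+1) * Dq (k+1) * G b k := by
    rw [Finset.sum_range_succ, G_zero (show a < K'+1 by omega)]
    ring
  have B3 : ∑ k ∈ Finset.range (K'+1), G a k * Dq (k+1) * G b (k+1)
      = ∑ k ∈ Finset.range K', G a k * Dq (k+1) * G b (k+1) := by
    rw [Finset.sum_range_succ, G_zero (show a < K' by omega)]
    ring
  rw [A1, B1, A3, B3]
  ring

lemma cat_base (b : ℕ) : (14:ℚ) * Fq b 0 = catalan (b+4) := by
  unfold Fq
  rw [if_pos (Nat.zero_le b), Nat.sub_zero]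
  have hcat := succ_mul_catalan_eq_centralBinom (b+4)
  rw [Nat.centralBinom_eq_two_mul_choose] at hcat
  rw [show 2*(b+4) = 2*b+8 by omega] at hcat
  have n1 : ((b:ℚ)+1) ≠ 0 := by positivity
  have n2 : ((b:ℚ)+2) ≠ 0 := by positivity
  have n3 : ((b:ℚ)+3) ≠ 0 := by positivity
  have n4 : ((b:ℚ)+4) ≠ 0 := by positivity
  have n5 : ((b:ℚ)+5) ≠ 0 := by positivity
  have hcatQ : (catalan (b+4) : ℚ) = ((2*b+8).choose (b+4) : ℚ) / ((b:ℚ)+5) := by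
    have h := congrArg (Nat.cast (R := ℚ)) hcat
    push_cast at h
    field_simp
    linarith [h]
  have e1 := choose_ratio (2*b+8) b (by omega)
  have e2 := choose_ratio (2*b+8) (b+1) (by omega)
  have e3 := choose_ratio (2*b+8) (b+2) (by omega)
  have e4 := choose_ratio (2*b+8) (b+3) (by omega)
  rw [show b+1+1 = b+2 by omega] at e2
  rw [show b+2+1 = b+3 by omega] at e3
  rw [show b+3+1 = b+4 by omega] at e4
  push_cast at e1 e2 e3 e4
  have hc4 : ((2*b+8).choose (b+4) : ℚ)
      = ((2*b+8).choose (b+3) : ℚ) * ((b:ℚ)+5) / ((b:ℚ)+4) := by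
    field_simp; linear_combination e4
  have hc3 : ((2*b+8).choose (b+3) : ℚ)
      = ((2*b+8).choose (b+2) : ℚ) * ((b:ℚ)+6) / ((b:ℚ)+3) := by
    field_simp; linear_combination e3
  have hc2 : ((2*b+8).choose (b+2) : ℚ)
      = ((2*b+8).choose (b+1) : ℚ) * ((b:ℚ)+7) / ((b:ℚ)+2) := by
    field_simp; linear_combination e2
  have hc1 : ((2*b+8).choose (b+1) : ℚ)
      = ((2*b+8).choose b : ℚ) * ((b:ℚ)+8) / ((b:ℚ)+1) := by
    field_simp; linear_combination e1
  rw [hcatQ, hc4, hc3, hc2, hc1]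
  push_cast
  field_simp
  ring

lemma chain : ∀ a b K, a + 1 ≤ K →
    ∑ k ∈ Finset.range K, G a k * Dq k * G b k = catalan (a+b+4) := by
  intro a
  induction a with
  | zero =>
    intro b K hK
    rw [Finset.sum_eq_single_of_mem 0 (Finset.mem_range.mpr (by omega))
      (fun k _ hk => by
        rw [show G 0 k = if k = 0 then 1 else 0 from rfl, if_neg hk]
        ring)]
    rw [show G 0 0 = 1 from rfl, G_eq_Fq]
    have h14 : Dq 0 = 14 := by norm_num [Dq]
    rw [h14, show (0:ℕ)+b+4 = b+4 by omega]
    have h := cat_base b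
    linarith [h]
  | succ a iha =>
    intro b K hK
    obtain ⟨K', rfl⟩ : ∃ K', K = K'+1 := ⟨K-1, by omega⟩
    rw [transfer a b K' (by omega)]
    rw [iha (b+1) (K'+1) (by omega)]
    rw [show a+(b+1)+4 = a+1+b+4 by omega]

lemma prodDq (n : ℕ) : ∏ k ∈ Finset.range n, Dq k
    = ((n:ℚ)+1)*((n:ℚ)+2)^2*((n:ℚ)+3)*(2*(n:ℚ)+3)*(2*(n:ℚ)+5)/180 := by
  induction n with
  | zero => norm_num
  | succ m ih =>
    rw [Finset.prod_range_succ, ih]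
    unfold Dq
    have h1 : ((m:ℚ)+1) ≠ 0 := by positivity
    have h2 : ((m:ℚ)+2) ≠ 0 := by positivity
    have h3 : (2*(m:ℚ)+3) ≠ 0 := by positivity
    push_cast
    field_simp
    ring

theorem hankel_catalan_shift4 (n : ℕ) (hn : 0 < n) :
    Matrix.det (Matrix.of (fun i j : Fin n => (catalan ((i : ℕ) + j + 4) : ℚ))) =
      (4 / (Nat.factorial 3 * Nat.factorial 5 : ℚ)) *
        ((n + 1) * (n + 2) ^ 2 * (n + 3) * (2 * n + 3) * (2 * n + 5)) := by
  have hfact : Matrix.of (fun i j : Fin n => (catalan ((i : ℕ) + j + 4) : ℚ))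
      = (Matrix.of fun i k : Fin n => G i k) * Matrix.diagonal (fun k : Fin n => Dq k) *
        (Matrix.of fun i k : Fin n => G i k).transpose := by
    ext i j
    rw [Matrix.mul_apply]
    simp only [Matrix.mul_diagonal, Matrix.transpose_apply, Matrix.of_apply]
    rw [Fin.sum_univ_eq_sum_range (fun k => G (i:ℕ) k * Dq k * G (j:ℕ) k) n]
    rw [chain (i:ℕ) (j:ℕ) n (by omega)]
  rw [hfact, Matrix.det_mul, Matrix.det_mul, Matrix.det_transpose]
  have hdetL : Matrix.det (Matrix.of fun i k : Fin n => G i k) = 1 := by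
    rw [Matrix.det_of_lowerTriangular (Matrix.of fun i k : Fin n => G i k)
      (fun i j hij => by
        rw [Matrix.of_apply]
        exact G_zero (show (i:ℕ) < (j:ℕ) from hij))]
    rw [Finset.prod_congr rfl (fun i _ => by rw [Matrix.of_apply, G_eq_Fq, Fq_diag])]
    simp
  rw [hdetL, Matrix.det_diagonal]
  rw [Fin.prod_univ_eq_prod_range (fun k => Dq k) n, prodDq n]
  norm_num [Nat.factorial]
  ring
end

section
/- For all nonnegative integers n and r, the n×n Hankel determinant det_{0≤i,j≤n-1}(C_{i+j+r}) of shifted Catalan numbers equals the r×r determinant det_{0≤i,j≤r-1} binom(i+j+n, i-j+n) of binomial coefficients. -/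
/-- `binom a b` for integer `b`: the binomial coefficient, zero when `b < 0` or `b > a`. -/
def binom (a : ℕ) (b : ℤ) : ℕ := if 0 ≤ b then a.choose b.toNat else 0

/-!
Let `N = n + r`. The Catalan Hankel matrix `H = (C (i + j))` of size `N` factors as `H = L Lᵀ`,
where `L i k = binom(2i, i+k) - binom(2i, i+k+1)` is the unitriangular Catalan triangle, whose
inverse is `L⁻¹ k j = (-1)^(k+j) binom(k+j, 2j)`. Both facts come from one recurrence: row `i + 1`
of `L` is row `i` of `L` times the symmetric tridiagonal matrix `J` of the Catalan numbers, and `J`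
maps column `j + 1` of `L⁻¹` to column `j` and kills column `0`. Hence `det H = 1` and
`H⁻¹ = (L⁻¹)ᵀ L⁻¹`.

By Jacobi's complementary minor theorem, the minor of `H` on rows `r, …, N - 1` and columns
`0, …, n - 1`, which is the left-hand side, equals `(-1)^(nr)` times the minor of `H⁻¹` on rows
`n, …, N - 1` and columns `0, …, r - 1`. Since `L⁻¹` is lower triangular, that minor is a
unitriangular matrix times `(L⁻¹ (n + t) j)`, which is the binomial matrix of the right-hand side
up to the signs `(-1)^(n+t+j)`; these contribute another `(-1)^(nr)`.
-/

open Finset Matrix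

theorem Matrix.det_toBlocks₁₁_eq_det_mul_det_toBlocks₂₂ {R α β : Type*} [CommRing R]
    [Fintype α] [Fintype β] [DecidableEq α] [DecidableEq β] {G K : Matrix (α ⊕ β) (α ⊕ β) R}
    (h : G * K = 1) : G.toBlocks₁₁.det = G.det * K.toBlocks₂₂.det := by
  have hblocks := h
  rw [← fromBlocks_toBlocks G, ← fromBlocks_toBlocks K, fromBlocks_multiply, ← fromBlocks_one,
    fromBlocks_inj] at hblocks
  obtain ⟨-, h₁₂, -, h₂₂⟩ := hblocks
  have hmul : G * fromBlocks 1 K.toBlocks₁₂ 0 K.toBlocks₂₂ =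
      fromBlocks G.toBlocks₁₁ 0 G.toBlocks₂₁ 1 := by
    conv_lhs => rw [← fromBlocks_toBlocks G]
    rw [fromBlocks_multiply, h₁₂, h₂₂]
    simp
  have := congrArg det hmul
  rwa [det_mul, det_fromBlocks_zero₂₁, det_fromBlocks_zero₁₂, det_one, det_one, one_mul,
    mul_one, eq_comm] at this

theorem Matrix.det_submatrix_trans_perm {R ι κ : Type*} [CommRing R] [Fintype ι] [DecidableEq ι]
    [Fintype κ] [DecidableEq κ] (A : Matrix ι ι R) (e : κ ≃ ι) (ρ : Equiv.Perm ι) :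
    (A.submatrix (e.trans ρ) e).det = Equiv.Perm.sign ρ * A.det := by
  rw [show A.submatrix (e.trans ρ) e = (A.submatrix ρ id).submatrix e e from rfl,
    det_submatrix_equiv_self, det_permute]

theorem coe_finRotate_pow {N : ℕ} (s : ℕ) (x : Fin N) :
    ((finRotate N ^ s) x : ℕ) = (x + s) % N := by
  induction s with
  | zero => simp [Nat.mod_eq_of_lt x.isLt]
  | succ s ih =>
    obtain _ | N := N
    · exact x.elim0
    rw [pow_succ', Equiv.Perm.mul_apply, finRotate_apply, Fin.val_add, ih, Fin.val_one',
      ← Nat.add_mod, add_assoc]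

theorem sign_finRotate_add_pow (n r : ℕ) :
    (Equiv.Perm.sign (finRotate (n + r) ^ r) : ℤ) = (-1) ^ (n * r) := by
  rw [map_pow, sign_finRotate, ← pow_mul]
  push_cast
  obtain _ | r := r
  · simp
  rw [show n + (r + 1) - 1 = n + r by omega, add_mul, pow_add,
    (Nat.even_mul_succ_self r).neg_one_pow, mul_one]

section CatalanJacobi

variable {R : Type*} [CommRing R]

-- The Jacobi matrix of the Catalan numbers (`b₀ = 1`, `bₖ = 2`, `λₖ = 1`), acting on columns.
def catalanJacobi (m : ℕ → R) : ℕ → R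
  | 0 => m 0 + m 1
  | k + 1 => m k + 2 * m (k + 1) + m (k + 2)

theorem sum_range_catalanJacobi_mul_comm (a b : ℕ → R) {K : ℕ} (h₀ : a K = 0)
    (h₁ : a (K + 1) = 0) :
    ∑ k ∈ range (K + 1), catalanJacobi a k * b k =
      ∑ k ∈ range (K + 1), a k * catalanJacobi b k := by
  set g : ℕ → R := fun k ↦ a k * b (k + 1) - a (k + 1) * b k
  have telescope : ∑ k ∈ range K, (g (k + 1) - g k) = -g 0 := by
    rw [sum_range_sub]
    simp [g, h₀, h₁]
  have hshift : ∑ k ∈ range K, catalanJacobi a (k + 1) * b (k + 1) =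
      ∑ k ∈ range K, a (k + 1) * catalanJacobi b (k + 1) - ∑ k ∈ range K, (g (k + 1) - g k) := by
    rw [← sum_sub_distrib]
    refine sum_congr rfl fun k _ ↦ ?_
    simp only [catalanJacobi, g]
    ring
  rw [sum_range_succ', sum_range_succ', hshift, telescope]
  simp only [catalanJacobi, g]
  ring

end CatalanJacobi

def catalanTriangle (i k : ℕ) : ℤ := (2 * i).choose (i + k) - (2 * i).choose (i + k + 1)

theorem catalanTriangle_eq_zero_of_lt {i k : ℕ} (h : i < k) : catalanTriangle i k = 0 := by
  simp [catalanTriangle, Nat.choose_eq_zero_of_lt (by omega : 2 * i < i + k),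
    Nat.choose_eq_zero_of_lt (by omega : 2 * i < i + k + 1)]

theorem catalanTriangle_self (i : ℕ) : catalanTriangle i i = 1 := by
  simp [catalanTriangle, ← two_mul]

theorem catalanTriangle_zero_right (i : ℕ) : catalanTriangle i 0 = catalan i := by
  have hcentral : ((i + 1) * catalan i : ℤ) = (2 * i).choose i := by
    exact_mod_cast succ_mul_catalan_eq_centralBinom i
  have hnext : ((2 * i).choose (i + 1) * (i + 1) : ℤ) = (2 * i).choose i * i := by
    have := Nat.choose_succ_right_eq (2 * i) i
    rw [show 2 * i - i = i by omega] at this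
    exact_mod_cast this
  have hpos : (i + 1 : ℤ) ≠ 0 := by positivity
  apply mul_left_cancel₀ hpos
  simp only [catalanTriangle, add_zero]
  linear_combination -hcentral - hnext

theorem Nat.choose_add_two_add_two (a b : ℕ) :
    (a + 2).choose (b + 2) = a.choose b + 2 * a.choose (b + 1) + a.choose (b + 2) := by
  simp only [Nat.choose_succ_succ']
  ring

theorem Nat.choose_add_two_add_two_add_choose (a b : ℕ) :
    (a + 2).choose (b + 2) + a.choose (b + 2) = a.choose b + 2 * (a + 1).choose (b + 2) := by
  simp only [Nat.choose_succ_succ']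
  ring

theorem catalanJacobi_catalanTriangle (i : ℕ) :
    catalanJacobi (catalanTriangle i) = catalanTriangle (i + 1) := by
  funext k
  cases k with
  | zero =>
    have hsymm := Nat.choose_symm_half i
    simp only [catalanJacobi, catalanTriangle, add_zero]
    rw [show 2 * (i + 1) = 2 * i + 2 by ring, show i + 1 + 1 = i + 2 by ring,
      Nat.choose_add_two_add_two, Nat.choose_succ_succ', Nat.choose_succ_succ', ← hsymm,
      Nat.choose_succ_succ']
    push_cast
    ring
  | succ k =>
    simp only [catalanJacobi, catalanTriangle]
    rw [show 2 * (i + 1) = 2 * i + 2 by ring, show i + 1 + (k + 1) = i + k + 2 by ring,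
      show i + k + 2 + 1 = i + k + 1 + 2 by ring, Nat.choose_add_two_add_two,
      Nat.choose_add_two_add_two]
    push_cast
    ring_nf

theorem sum_range_catalanTriangle_succ_mul (i : ℕ) (m : ℕ → ℤ) :
    ∑ k ∈ range (i + 2), catalanTriangle (i + 1) k * m k =
      ∑ k ∈ range (i + 1), catalanTriangle i k * catalanJacobi m k := by
  rw [← catalanJacobi_catalanTriangle, sum_range_catalanJacobi_mul_comm _ _
    (catalanTriangle_eq_zero_of_lt (by omega)) (catalanTriangle_eq_zero_of_lt (by omega)),
    sum_range_succ _ (i + 1), catalanTriangle_eq_zero_of_lt (by omega), zero_mul, add_zero]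

theorem sum_range_catalanTriangle_mul_catalanTriangle (i j : ℕ) :
    ∑ k ∈ range (i + 1), catalanTriangle i k * catalanTriangle j k = catalan (i + j) := by
  induction i generalizing j with
  | zero => simp [catalanTriangle_self, catalanTriangle_zero_right]
  | succ i ih =>
    rw [sum_range_catalanTriangle_succ_mul, catalanJacobi_catalanTriangle, ih, add_right_comm,
      add_assoc]

def catalanTriangleInv (k j : ℕ) : ℤ := (-1) ^ (k + j) * (k + j).choose (2 * j)

theorem catalanTriangleInv_eq_zero_of_lt {k j : ℕ} (h : k < j) : catalanTriangleInv k j = 0 := by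
  simp [catalanTriangleInv, Nat.choose_eq_zero_of_lt (by omega : k + j < 2 * j)]

theorem catalanTriangleInv_self (k : ℕ) : catalanTriangleInv k k = 1 := by
  simp [catalanTriangleInv, ← two_mul]

theorem catalanJacobi_catalanTriangleInv_zero :
    catalanJacobi (catalanTriangleInv · 0) = 0 := by
  funext k
  cases k <;> simp [catalanJacobi, catalanTriangleInv, pow_succ]; ring

theorem catalanJacobi_catalanTriangleInv_succ (j : ℕ) :
    catalanJacobi (catalanTriangleInv · (j + 1)) = (catalanTriangleInv · j) := by
  funext k
  cases k with
  | zero =>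
    have key : ((j + 2).choose (2 * j + 2) + j.choose (2 * j + 2) : ℤ) =
        j.choose (2 * j) + 2 * (j + 1).choose (2 * j + 2) := by
      exact_mod_cast Nat.choose_add_two_add_two_add_choose j (2 * j)
    simp only [catalanJacobi, catalanTriangleInv, zero_add, mul_add, mul_one,
      show 1 + (j + 1) = j + 2 by ring]
    rw [Nat.choose_eq_zero_of_lt (by omega : j < 2 * j + 2),
      Nat.choose_eq_zero_of_lt (by omega : j + 1 < 2 * j + 2)] at key
    rw [Nat.choose_eq_zero_of_lt (by omega : j + 1 < 2 * j + 2)]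
    linear_combination (-1 : ℤ) ^ j * key
  | succ k =>
    have key : ((k + j + 1 + 2).choose (2 * j + 2) + (k + j + 1).choose (2 * j + 2) : ℤ) =
        (k + j + 1).choose (2 * j) + 2 * (k + j + 1 + 1).choose (2 * j + 2) := by
      exact_mod_cast Nat.choose_add_two_add_two_add_choose (k + j + 1) (2 * j)
    simp only [catalanJacobi, catalanTriangleInv, show k + (j + 1) = k + j + 1 by ring,
      show k + 1 + (j + 1) = k + j + 1 + 1 by ring, show k + 2 + (j + 1) = k + j + 1 + 2 by ring,
      show k + 1 + j = k + j + 1 by ring, show 2 * (j + 1) = 2 * j + 2 by ring]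
    linear_combination (-1 : ℤ) ^ (k + j + 1) * key

theorem sum_range_catalanTriangle_mul_catalanTriangleInv (i j : ℕ) :
    ∑ k ∈ range (i + 1), catalanTriangle i k * catalanTriangleInv k j =
      if i = j then 1 else 0 := by
  induction i generalizing j with
  | zero =>
    cases j <;>
      simp [catalanTriangle_self, catalanTriangleInv_self, catalanTriangleInv_eq_zero_of_lt]
  | succ i ih =>
    cases j with
    | zero => simp [sum_range_catalanTriangle_succ_mul, catalanJacobi_catalanTriangleInv_zero]
    | succ j => simp [sum_range_catalanTriangle_succ_mul, catalanJacobi_catalanTriangleInv_succ, ih]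

theorem sum_range_catalanTriangle_mul_of_lt {i K : ℕ} (h : i < K) (f : ℕ → ℤ) :
    ∑ k ∈ range K, catalanTriangle i k * f k = ∑ k ∈ range (i + 1), catalanTriangle i k * f k := by
  refine (sum_subset (range_subset_range.mpr h) fun k _ hk ↦ ?_).symm
  rw [catalanTriangle_eq_zero_of_lt (by simpa using hk), zero_mul]

section Matrices

variable (N : ℕ)

def catalanHankel : Matrix (Fin N) (Fin N) ℤ := of fun i j ↦ (catalan (i + j : ℕ) : ℤ)

def catalanTriangleMatrix : Matrix (Fin N) (Fin N) ℤ := of fun i k ↦ catalanTriangle i k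

def catalanTriangleInvMatrix : Matrix (Fin N) (Fin N) ℤ := of fun k j ↦ catalanTriangleInv k j

theorem catalanTriangleMatrix_mul_catalanTriangleInvMatrix :
    catalanTriangleMatrix N * catalanTriangleInvMatrix N = 1 := by
  ext i j
  simp only [mul_apply, catalanTriangleMatrix, catalanTriangleInvMatrix, of_apply]
  rw [Fin.sum_univ_eq_sum_range (fun k ↦ catalanTriangle i k * catalanTriangleInv k j),
    sum_range_catalanTriangle_mul_of_lt i.isLt, sum_range_catalanTriangle_mul_catalanTriangleInv,
    one_apply]
  simp only [Fin.val_inj]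

theorem catalanHankel_eq_mul_transpose :
    catalanHankel N = catalanTriangleMatrix N * (catalanTriangleMatrix N)ᵀ := by
  ext i j
  rw [mul_apply]
  simp only [catalanHankel, catalanTriangleMatrix, transpose_apply, of_apply]
  rw [Fin.sum_univ_eq_sum_range (fun k ↦ catalanTriangle i k * catalanTriangle j k),
    sum_range_catalanTriangle_mul_of_lt i.isLt, sum_range_catalanTriangle_mul_catalanTriangle]

theorem det_catalanTriangleMatrix : (catalanTriangleMatrix N).det = 1 := by
  rw [det_of_isLowerTriangular _ fun _ _ ↦ catalanTriangle_eq_zero_of_lt]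
  simp [catalanTriangleMatrix, catalanTriangle_self]

theorem det_catalanHankel : (catalanHankel N).det = 1 := by
  rw [catalanHankel_eq_mul_transpose, det_mul, det_transpose, det_catalanTriangleMatrix, one_mul]

theorem catalanHankel_mul_transpose_mul_self :
    catalanHankel N * ((catalanTriangleInvMatrix N)ᵀ * catalanTriangleInvMatrix N) = 1 := by
  have hleft := mul_eq_one_comm.mp (catalanTriangleMatrix_mul_catalanTriangleInvMatrix N)
  rw [catalanHankel_eq_mul_transpose, Matrix.mul_assoc,
    ← Matrix.mul_assoc _ _ (catalanTriangleInvMatrix N), ← transpose_mul, hleft, transpose_one,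
    Matrix.one_mul,
    catalanTriangleMatrix_mul_catalanTriangleInvMatrix]

end Matrices

theorem binom_add_sub (a b : ℕ) : binom (a + b) ((a : ℤ) - b) = (a + b).choose (2 * b) := by
  unfold binom
  split_ifs with h
  · rw [show ((a : ℤ) - b).toNat = a - b by omega, ← Nat.choose_symm (by omega),
      show a + b - (a - b) = 2 * b by omega]
  · rw [Nat.choose_eq_zero_of_lt (by omega)]

section Duality

variable (n r : ℕ)

-- Rows `r, …, N - 1` of the Hankel matrix first, then rows `0, …, r - 1`.
def hankelRows : Fin n ⊕ Fin r ≃ Fin (n + r) := finSumFinEquiv.trans (finRotate (n + r) ^ r)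

theorem coe_hankelRows_inl (i : Fin n) : (hankelRows n r (.inl i) : ℕ) = i + r := by
  simp [hankelRows, coe_finRotate_pow, Nat.mod_eq_of_lt]

theorem hankelRows_inr (j : Fin r) :
    hankelRows n r (.inr j) = Fin.castLE (Nat.le_add_left r n) j := by
  ext
  simp only [hankelRows, Equiv.trans_apply, finSumFinEquiv_apply_right, coe_finRotate_pow,
    Fin.val_natAdd, Fin.val_castLE]
  rw [add_right_comm, Nat.add_mod_left, Nat.mod_eq_of_lt (by omega)]

theorem toBlocks₁₁_catalanHankel_submatrix :
    ((catalanHankel (n + r)).submatrix (hankelRows n r) finSumFinEquiv).toBlocks₁₁ =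
      of fun i j : Fin n ↦ (catalan (i + j + r) : ℤ) := by
  ext i j
  simp [toBlocks₁₁, catalanHankel, coe_hankelRows_inl, add_right_comm]

theorem det_catalanHankel_submatrix :
    ((catalanHankel (n + r)).submatrix (hankelRows n r) finSumFinEquiv).det = (-1) ^ (n * r) := by
  rw [hankelRows, det_submatrix_trans_perm, Int.cast_id, sign_finRotate_add_pow,
    det_catalanHankel, mul_one]

theorem toBlocks₂₂_catalanTriangleInv_submatrix :
    (((catalanTriangleInvMatrix (n + r))ᵀ * catalanTriangleInvMatrix (n + r)).submatrix
        finSumFinEquiv (hankelRows n r)).toBlocks₂₂ =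
      ((catalanTriangleInvMatrix (n + r)).submatrix (Fin.natAdd n) (Fin.natAdd n))ᵀ *
        (catalanTriangleInvMatrix (n + r)).submatrix (Fin.natAdd n)
          (Fin.castLE (Nat.le_add_left r n)) := by
  ext i j
  simp only [toBlocks₂₂, of_apply, submatrix_apply, mul_apply, transpose_apply,
    finSumFinEquiv_apply_right, hankelRows_inr, Fin.sum_univ_add]
  rw [Fintype.sum_eq_zero _ fun k ↦ ?_, zero_add]
  simp [catalanTriangleInvMatrix, catalanTriangleInv_eq_zero_of_lt (by omega : (k : ℕ) < n + i)]

theorem det_catalanTriangleInv_submatrix_natAdd_natAdd :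
    ((catalanTriangleInvMatrix (n + r)).submatrix (Fin.natAdd n) (Fin.natAdd n)).det = 1 := by
  refine (det_of_isLowerTriangular _ fun i j h ↦ ?_).trans ?_
  · exact catalanTriangleInv_eq_zero_of_lt (by simpa using h)
  · simp [catalanTriangleInvMatrix, catalanTriangleInv_self]

theorem det_catalanTriangleInv_submatrix_natAdd_castLE :
    ((catalanTriangleInvMatrix (n + r)).submatrix (Fin.natAdd n)
      (Fin.castLE (Nat.le_add_left r n))).det =
      (-1) ^ (n * r) * (of fun i j : Fin r ↦ (binom (i + j + n) ((i : ℤ) - j + n) : ℤ)).det := by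
  set R := of fun i j : Fin r ↦ (binom (i + j + n) ((i : ℤ) - j + n) : ℤ)
  have hfactor : (catalanTriangleInvMatrix (n + r)).submatrix (Fin.natAdd n)
      (Fin.castLE (Nat.le_add_left r n)) =
      diagonal (fun i : Fin r ↦ (-1) ^ (n + i : ℕ)) * R *
        diagonal fun j : Fin r ↦ (-1) ^ (j : ℕ) := by
    ext i j
    rw [mul_diagonal, diagonal_mul]
    simp only [R, catalanTriangleInvMatrix, submatrix_apply, of_apply, Fin.val_natAdd,
      Fin.val_castLE]
    rw [show (i : ℕ) + j + n = n + i + j by ring,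
      show (i : ℤ) - j + n = ((n + i : ℕ) : ℤ) - j by push_cast; ring, binom_add_sub,
      catalanTriangleInv, pow_add _ (n + i)]
    ring
  have hsign (i : ℕ) : (-1 : ℤ) ^ (n + i) * (-1) ^ i = (-1) ^ n := by
    rw [pow_add, mul_assoc, ← mul_pow, neg_one_mul, neg_neg, one_pow, mul_one]
  rw [hfactor, det_mul, det_mul, det_diagonal, det_diagonal, mul_right_comm, ← prod_mul_distrib]
  simp [hsign, pow_mul]

end Duality

theorem hankel_catalan_eq_binom_det (n r : ℕ) :
    Matrix.det (Matrix.of (fun i j : Fin n => (catalan ((i : ℕ) + j + r) : ℤ))) =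
      Matrix.det (Matrix.of (fun i j : Fin r =>
        (binom ((i : ℕ) + j + n) ((i : ℤ) - (j : ℤ) + n) : ℤ))) := by
  have jacobi := det_toBlocks₁₁_eq_det_mul_det_toBlocks₂₂
    (G := (catalanHankel (n + r)).submatrix (hankelRows n r) finSumFinEquiv)
    (K := ((catalanTriangleInvMatrix (n + r))ᵀ * catalanTriangleInvMatrix (n + r)).submatrix
      finSumFinEquiv (hankelRows n r))
    (by rw [submatrix_mul_equiv, catalanHankel_mul_transpose_mul_self, submatrix_one_equiv])
  rw [toBlocks₁₁_catalanHankel_submatrix, det_catalanHankel_submatrix,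
    toBlocks₂₂_catalanTriangleInv_submatrix, det_mul, det_transpose,
    det_catalanTriangleInv_submatrix_natAdd_natAdd,
    det_catalanTriangleInv_submatrix_natAdd_castLE] at jacobi
  rw [jacobi, one_mul, ← mul_assoc, ← pow_add, ← two_mul, pow_mul, neg_one_sq, one_pow, one_mul]
end

section
/- For every positive integer n, det_{0≤i,j≤n-1}(C_{i+j}) = 1, i.e., the Hankel transform of the Catalan sequence with shift 0 is identically 1. -/
open Finset Matrix

/-- Dyck-path counts: `T n k` = number of lattice paths of length `n` from
height `0` to height `k` with steps `±1` staying nonnegative (ballot numbers). -/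
def T : ℕ → ℕ → ℕ
  | 0, 0 => 1
  | 0, _+1 => 0
  | n+1, 0 => T n 1
  | n+1, k+1 => T n k + T n (k+2)

lemma T_zero_of_lt : ∀ n k, n < k → T n k = 0 := by
  intro n
  induction n with
  | zero => intro k hk; match k, hk with | k+1, _ => rfl
  | succ n ih =>
    intro k hk
    match k, hk with
    | k+1, hk =>
      show T n k + T n (k+2) = 0
      rw [ih k (by omega), ih (k+2) (by omega)]

lemma T_diag : ∀ n, T n n = 1 := by
  intro n
  induction n with
  | zero => rfl
  | succ n ih =>
    show T n n + T n (n+2) = 1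
    rw [ih, T_zero_of_lt n (n+2) (by omega)]

lemma T_parity : ∀ n k, (n + k) % 2 = 1 → T n k = 0 := by
  intro n
  induction n with
  | zero => intro k h; match k, h with | k+1, _ => rfl
  | succ n ih =>
    intro k h
    match k with
    | 0 => show T n 1 = 0; exact ih 1 (by omega)
    | k+1 =>
      show T n k + T n (k+2) = 0
      rw [ih k (by omega), ih (k+2) (by omega)]

lemma key (m n N : ℕ) :
    ∑ k ∈ range (N+1), T (m+1) k * T n k
      = (∑ j ∈ range N, T m j * T n (j+1)) + ∑ i ∈ range (N+1), T m (i+1) * T n i := by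
  rw [Finset.sum_range_succ' (fun k => T (m+1) k * T n k) N,
      Finset.sum_range_succ' (fun i => T m (i+1) * T n i) N]
  have h1 : ∀ j, T (m+1) (j+1) = T m j + T m (j+2) := fun j => rfl
  have h0 : T (m+1) 0 = T m 1 := rfl
  simp only [h1, h0, add_mul]
  rw [Finset.sum_add_distrib]
  ring

lemma W_stable (a b N : ℕ) (h : a < N) :
    ∑ j ∈ range (N+1), T a j * T b (j+1) = ∑ j ∈ range N, T a j * T b (j+1) := by
  rw [Finset.sum_range_succ, T_zero_of_lt a N h]
  simp

lemma shift (m n N : ℕ) (hm : m + 1 < N) (hn : n + 1 < N) :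
    ∑ k ∈ range (N+1), T (m+1) k * T n k = ∑ k ∈ range (N+1), T m k * T (n+1) k := by
  rw [key m n N]
  have : ∑ k ∈ range (N+1), T m k * T (n+1) k
      = ∑ k ∈ range (N+1), T (n+1) k * T m k := by
    simp [mul_comm]
  rw [this, key n m N]
  have e1 : ∑ i ∈ range (N+1), T m (i+1) * T n i
      = ∑ i ∈ range (N+1), T n i * T m (i+1) := by simp [mul_comm]
  rw [e1, W_stable n m N (by omega), ← W_stable m n N (by omega)]
  have e2 : ∑ j ∈ range (N+1), T m j * T n (j+1)
      = ∑ j ∈ range (N+1), T n (j+1) * T m j := by simp [mul_comm]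
  rw [e2]
  ring

lemma conv : ∀ n m N, m + n < N →
    ∑ k ∈ range (N+1), T m k * T n k = T (m+n) 0 := by
  intro n
  induction n with
  | zero =>
    intro m N h
    have : ∀ k ∈ range (N+1), k ≠ 0 → T m k * T 0 k = 0 := by
      intro k _ hk
      match k, hk with
      | k+1, _ => show T m (k+1) * T 0 (k+1) = 0; show T m (k+1) * 0 = 0; ring
    rw [Finset.sum_eq_single 0 this (by intro h'; simp at h')]
    show T m 0 * 1 = T (m+0) 0
    simp
  | succ n ih =>
    intro m N h
    rw [← shift m n N (by omega) (by omega), ih (m+1) N (by omega)]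
    congr 1
    omega

lemma T_closed : ∀ n k, (n + k) % 2 = 0 →
    T n k + Nat.choose n ((n+k)/2 + 1) = Nat.choose n ((n+k)/2) := by
  intro n
  induction n with
  | zero =>
    intro k hk
    match k with
    | 0 => rfl
    | k+1 =>
      have hs : (0+(k+1))/2 ≥ 1 := by omega
      show 0 + Nat.choose 0 ((0+(k+1))/2 + 1) = Nat.choose 0 ((0+(k+1))/2)
      rw [Nat.choose_eq_zero_of_lt (by omega), Nat.choose_eq_zero_of_lt (by omega)]
  | succ n ih =>
    intro k hk
    match k with
    | 0 =>
      obtain ⟨s, hs⟩ : ∃ s, n = 2*s + 1 := ⟨n/2, by omega⟩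
      have hdiv : (n+1+0)/2 = s+1 := by omega
      rw [hdiv]
      show T n 1 + Nat.choose (n+1) (s+2) = Nat.choose (n+1) (s+1)
      have ih1 := ih 1 (by omega)
      have hd1 : (n+1)/2 = s+1 := by omega
      rw [hd1] at ih1
      rw [Nat.choose_succ_succ n (s+1), Nat.choose_succ_succ n s]
      have hsym : Nat.choose n s = Nat.choose n (s+1) := by
        have := Nat.choose_symm (n := 2*s+1) (k := s+1) (by omega)
        have he : 2*s+1-(s+1) = s := by omega
        rw [he] at this
        rw [hs]; exact this
      simp only [Nat.succ_eq_add_one] at *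
      omega
    | k+1 =>
      obtain ⟨s, hs⟩ : ∃ s, n + k = 2*s := ⟨(n+k)/2, by omega⟩
      have hdiv : (n+1+(k+1))/2 = s+1 := by omega
      rw [hdiv]
      show (T n k + T n (k+2)) + Nat.choose (n+1) (s+2) = Nat.choose (n+1) (s+1)
      have ih1 := ih k (by omega)
      have ih2 := ih (k+2) (by omega)
      have hd1 : (n+k)/2 = s := by omega
      have hd2 : (n+(k+2))/2 = s+1 := by omega
      rw [hd1] at ih1
      rw [hd2] at ih2
      rw [Nat.choose_succ_succ n (s+1), Nat.choose_succ_succ n s]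
      simp only [Nat.succ_eq_add_one] at *
      omega

lemma T_catalan (m : ℕ) : T (2*m) 0 = catalan m := by
  have h := T_closed (2*m) 0 (by omega)
  have hd : (2*m+0)/2 = m := by omega
  rw [hd] at h
  have h2 : Nat.choose (2*m) (m+1) * (m+1) = Nat.choose (2*m) m * (2*m - m) :=
    Nat.choose_succ_right_eq (2*m) m
  have h3 : (m+1) * catalan m = Nat.choose (2*m) m := by
    rw [← Nat.centralBinom]; exact succ_mul_catalan_eq_centralBinom m
  have : (m+1) * T (2*m) 0 = (m+1) * catalan m := by
    have : 2*m - m = m := by omega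
    nlinarith [h, h2, h3]
  exact Nat.eq_of_mul_eq_mul_left (by omega) this

lemma even_sum (f : ℕ → ℕ) (hodd : ∀ k, f (2*k+1) = 0) :
    ∀ n, ∑ k ∈ range (2*n), f k = ∑ k ∈ range n, f (2*k) := by
  intro n
  induction n with
  | zero => simp
  | succ n ih =>
    have h2 : 2*(n+1) = (2*n+1)+1 := by omega
    rw [h2, Finset.sum_range_succ, Finset.sum_range_succ, ih, Finset.sum_range_succ,
        hodd n]
    simp

/-- the main convolution identity for even-index ballot numbers -/
lemma conv_even (i j n : ℕ) (hi : i < n) (hj : j < n) :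
    ∑ k ∈ range n, T (2*i) (2*k) * T (2*j) (2*k) = catalan (i+j) := by
  have hvan : ∀ k, i + 1 ≤ k → T (2*i) (2*k) * T (2*j) (2*k) = 0 := by
    intro k hk
    rw [T_zero_of_lt (2*i) (2*k) (by omega)]
    ring
  have trunc : ∀ M, i + 1 ≤ M →
      ∑ k ∈ range M, T (2*i) (2*k) * T (2*j) (2*k)
        = ∑ k ∈ range (i+1), T (2*i) (2*k) * T (2*j) (2*k) := by
    intro M hM
    rw [← Finset.sum_subset (Finset.range_subset_range.2 hM)]
    intro x hx hx'
    simp only [Finset.mem_range] at hx hx'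
    exact hvan x (by omega)
  have hbig := conv (2*j) (2*i) (2*i+2*j+1) (by omega)
  have he : 2*i+2*j+1+1 = 2*(i+j+1) := by omega
  rw [he] at hbig
  rw [even_sum (fun k => T (2*i) k * T (2*j) k)
      (fun k => by
        show T (2*i) (2*k+1) * T (2*j) (2*k+1) = 0
        rw [T_parity (2*i) (2*k+1) (by omega)]; ring) (i+j+1)] at hbig
  have h1 := trunc n (by omega)
  have h2 := trunc (i+j+1) (by omega)
  rw [h1, ← h2, hbig]
  have : 2*i+2*j = 2*(i+j) := by omega
  rw [this, T_catalan]

theorem hankel_catalan_shift0 (n : ℕ) (hn : 0 < n) :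
    Matrix.det (Matrix.of (fun i j : Fin n => (catalan ((i : ℕ) + j) : ℤ))) = 1 := by
  set L : Matrix (Fin n) (Fin n) ℤ :=
    Matrix.of (fun i k : Fin n => (T (2*(i:ℕ)) (2*(k:ℕ)) : ℤ)) with hL
  have hfact : Matrix.of (fun i j : Fin n => (catalan ((i : ℕ) + j) : ℤ)) = L * Lᵀ := by
    ext i j
    rw [Matrix.mul_apply]
    simp only [hL, Matrix.of_apply, Matrix.transpose_apply]
    have h := conv_even i j n i.isLt j.isLt
    have hcast : ((∑ k ∈ range n, T (2*(i:ℕ)) (2*k) * T (2*(j:ℕ)) (2*k) : ℕ) : ℤ)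
        = (catalan ((i:ℕ)+(j:ℕ)) : ℤ) := by exact_mod_cast congrArg Nat.cast h
    push_cast at hcast
    rw [← hcast, Finset.sum_range (fun k => (T (2*(i:ℕ)) (2*k) : ℤ) * (T (2*(j:ℕ)) (2*k) : ℤ))]
  have hLtri : ∀ i j : Fin n, i < j → L i j = 0 := by
    intro i j hij
    have hij' : (i:ℕ) < (j:ℕ) := hij
    simp only [hL, Matrix.of_apply]
    rw [T_zero_of_lt (2*(i:ℕ)) (2*(j:ℕ)) (by omega)]
    rfl
  have hdetL : L.det = 1 := by
    rw [Matrix.det_of_lowerTriangular L hLtri]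
    apply Finset.prod_eq_one
    intro i _
    simp only [hL, Matrix.of_apply, T_diag]
    rfl
  rw [hfact, Matrix.det_mul, Matrix.det_transpose, hdetL]
  ring
end

section
/- For every positive integer n, det_{0≤i,j≤n-1}(C_{i+j+1}) = 1, i.e., the Hankel transform of the Catalan sequence with shift 1 is identically 1. -/
/-- `cp n h` = number of nonnegative lattice paths of length `n` from `0` to height `h`. -/
def cp : ℕ → ℕ → ℕ
  | 0, 0 => 1
  | 0, _+1 => 0
  | n+1, 0 => cp n 1
  | n+1, h+1 => cp n h + cp n (h+2)

lemma cp_zero_of_lt : ∀ n h, n < h → cp n h = 0 := by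
  intro n
  induction n with
  | zero => intro h hh; cases h with
    | zero => omega
    | succ h => rfl
  | succ n ih =>
    intro h hh
    cases h with
    | zero => omega
    | succ h =>
      show cp n h + cp n (h+2) = 0
      rw [ih h (by omega), ih (h+2) (by omega)]

lemma cp_diag : ∀ n, cp n n = 1 := by
  intro n
  induction n with
  | zero => rfl
  | succ n ih =>
    show cp n n + cp n (n+2) = 1
    rw [ih, cp_zero_of_lt n (n+2) (by omega)]

lemma cp_parity : ∀ n h, (n + h) % 2 = 1 → cp n h = 0 := by
  intro n
  induction n with
  | zero => intro h hh; cases h with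
    | zero => omega
    | succ h => rfl
  | succ n ih =>
    intro h hh
    cases h with
    | zero => exact ih 1 (by omega)
    | succ h =>
      show cp n h + cp n (h+2) = 0
      rw [ih h (by omega), ih (h+2) (by omega)]

lemma cp_closed : ∀ n h, (n + h) % 2 = 0 →
    (cp n h : ℤ) = (Nat.choose n ((n+h)/2) : ℤ) - Nat.choose n ((n+h)/2 + 1) := by
  intro n
  induction n with
  | zero =>
    intro h hh
    cases h with
    | zero => norm_num [show cp 0 0 = 1 from rfl]
    | succ h =>
      have h1 : (0 + (h+1))/2 ≥ 1 := by omega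
      rw [Nat.choose_eq_zero_of_lt (by omega), Nat.choose_eq_zero_of_lt (by omega)]
      simp [cp]
  | succ n ih =>
    intro h hh
    cases h with
    | zero =>
      show (cp n 1 : ℤ) = _
      obtain ⟨m, rfl⟩ : ∃ m, n = 2*m + 1 := ⟨n/2, by omega⟩
      rw [ih 1 (by omega)]
      have e0 : (2*m+1+1)/2 = m+1 := by omega
      have e1 : (2*m+1+1+0)/2 = m+1 := by omega
      rw [e0]
      rw [show 2*m+1+1 = (2*m+1)+1 from rfl, Nat.choose_succ_succ (2*m+1) m,
        Nat.choose_succ_succ (2*m+1) (m+1)]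
      have hsymm : (2*m+1).choose m = (2*m+1).choose (m+1) := by
        have := Nat.choose_symm (n := 2*m+1) (k := m+1) (by omega)
        rwa [show 2*m+1-(m+1) = m by omega] at this
      push_cast
      rw [hsymm]
      ring
    | succ h =>
      show ((cp n h + cp n (h+2) : ℕ) : ℤ) = _
      have hp1 : (n + h) % 2 = 0 := by omega
      have hp2 : (n + (h + 2)) % 2 = 0 := by omega
      push_cast
      rw [ih h hp1, ih (h+2) hp2]
      set q := (n + h) / 2 with hq
      have e1 : (n + (h+2))/2 = q + 1 := by omega
      have e2 : (n + 1 + (h+1))/2 = q + 1 := by omega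
      rw [e1, e2]
      rw [Nat.choose_succ_succ n q, Nat.choose_succ_succ n (q+1)]
      push_cast
      ring

lemma cp_catalan (m : ℕ) : (cp (2*m) 0 : ℤ) = catalan m := by
  have h := cp_closed (2*m) 0 (by omega)
  have e1 : (2*m + 0)/2 = m := by omega
  rw [e1] at h
  have key : ((m : ℤ) + 1) * (cp (2*m) 0 : ℤ) = ((m:ℤ)+1) * catalan m := by
    rw [h]
    have h1 : Nat.choose (2*m) (m+1) * (m+1) = Nat.choose (2*m) m * (2*m - m) :=
      Nat.choose_succ_right_eq (2*m) m
    have h2 : 2*m - m = m := by omega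
    rw [h2] at h1
    have h3 : (m+1) * catalan m = Nat.centralBinom m := succ_mul_catalan_eq_centralBinom m
    have : ((m:ℤ)+1) * ((Nat.choose (2*m) m : ℤ) - Nat.choose (2*m) (m+1))
        = ((m:ℤ)+1) * Nat.choose (2*m) m - Nat.choose (2*m) (m+1) * ((m:ℤ)+1) := by ring
    rw [this]
    have h1' : (Nat.choose (2*m) (m+1) : ℤ) * ((m:ℤ)+1) = (Nat.choose (2*m) m : ℤ) * m := by
      exact_mod_cast congrArg (Nat.cast : ℕ → ℤ) h1
    rw [h1']
    have h3' : ((m:ℤ)+1) * (catalan m : ℤ) = (Nat.centralBinom m : ℤ) := by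
      exact_mod_cast congrArg (Nat.cast : ℕ → ℤ) h3
    rw [h3']
    have : (Nat.centralBinom m : ℤ) = (Nat.choose (2*m) m : ℤ) := by
      unfold Nat.centralBinom; norm_cast
    rw [this]; ring
  have hne : ((m : ℤ) + 1) ≠ 0 := by positivity
  exact mul_left_cancel₀ hne key

open Finset in
lemma cp_step_sum (a b N : ℕ) (ha : a + 2 ≤ N) :
    ∑ h ∈ range N, cp (a+1) h * cp b h
      = ∑ h ∈ range N, cp a (h+1) * cp b h + ∑ h ∈ range N, cp a h * cp b (h+1) := by
  obtain ⟨M, rfl⟩ : ∃ M, N = M + 1 := ⟨N - 1, by omega⟩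
  rw [Finset.sum_range_succ' (fun h => cp (a+1) h * cp b h) M]
  rw [Finset.sum_range_succ' (fun h => cp a (h+1) * cp b h) M]
  rw [Finset.sum_range_succ (fun h => cp a h * cp b (h+1)) M]
  have hM : cp a M = 0 := cp_zero_of_lt a M (by omega)
  simp only [hM, zero_mul, add_zero]
  have : ∀ h, cp (a+1) (h+1) = cp a h + cp a (h+2) := fun h => rfl
  have h0 : cp (a+1) 0 = cp a 1 := rfl
  simp only [this, h0, add_mul]
  rw [Finset.sum_add_distrib]
  ring

open Finset in
lemma cp_swap (a b N : ℕ) (ha : a + 2 ≤ N) (hb : b + 2 ≤ N) :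
    ∑ h ∈ range N, cp (a+1) h * cp b h = ∑ h ∈ range N, cp a h * cp (b+1) h := by
  rw [cp_step_sum a b N ha]
  have := cp_step_sum b a N hb
  simp only [mul_comm (cp b _) (cp a _), mul_comm (cp (b+1) _) (cp a _)] at this
  rw [this]
  ring

open Finset in
lemma cp_conv : ∀ a b N, a + b + 2 ≤ N →
    ∑ h ∈ range N, cp a h * cp b h = cp (a + b) 0 := by
  intro a
  induction a with
  | zero =>
    intro b N hN
    rw [show (0:ℕ) + b = b by ring]
    obtain ⟨M, rfl⟩ : ∃ M, N = M + 1 := ⟨N - 1, by omega⟩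
    rw [Finset.sum_range_succ' (fun h => cp 0 h * cp b h) M]
    have : ∀ h, cp 0 (h+1) = 0 := fun h => rfl
    simp [this, cp]
  | succ a ih =>
    intro b N hN
    rw [cp_swap a b N (by omega) (by omega), ih (b+1) N (by omega)]
    congr 1
    omega

open Finset in
lemma cp_odd_sum (a b : ℕ) (ha : a % 2 = 1) : ∀ M,
    ∑ k ∈ range M, cp a (2*k+1) * cp b (2*k+1)
      = ∑ h ∈ range (2*M), cp a h * cp b h := by
  intro M
  induction M with
  | zero => simp
  | succ M ih =>
    rw [Finset.sum_range_succ, ih]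
    have e : 2 * (M + 1) = (2*M + 1) + 1 := by ring
    rw [e, Finset.sum_range_succ, Finset.sum_range_succ]
    have hz : cp a (2*M) = 0 := cp_parity a (2*M) (by omega)
    rw [hz]
    ring

open Finset in
theorem hankel_catalan_shift1 (n : ℕ) (hn : 0 < n) :
    Matrix.det (Matrix.of (fun i j : Fin n => (catalan ((i : ℕ) + j + 1) : ℤ))) = 1 := by
  set L : Matrix (Fin n) (Fin n) ℤ :=
    Matrix.of (fun i k : Fin n => (cp (2*(i:ℕ)+1) (2*(k:ℕ)+1) : ℤ)) with hL
  have key : ∀ i j : ℕ, i < n → j < n →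
      (catalan (i + j + 1) : ℤ)
        = ∑ k ∈ range n, ((cp (2*i+1) (2*k+1) * cp (2*j+1) (2*k+1) : ℕ) : ℤ) := by
    intro i j hi hj
    have hsub : ∑ k ∈ range n, cp (2*i+1) (2*k+1) * cp (2*j+1) (2*k+1)
        = ∑ k ∈ range (n + i + j + 2), cp (2*i+1) (2*k+1) * cp (2*j+1) (2*k+1) := by
      apply Finset.sum_subset (Finset.range_subset_range.mpr (by omega))
      intro k _ hk
      rw [Finset.mem_range, not_lt] at hk
      rw [cp_zero_of_lt (2*i+1) (2*k+1) (by omega), zero_mul]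
    have hodd := cp_odd_sum (2*i+1) (2*j+1) (by omega) (n + i + j + 2)
    have hconv := cp_conv (2*i+1) (2*j+1) (2*(n + i + j + 2)) (by omega)
    have hcat := cp_catalan (i + j + 1)
    have : (2*i+1) + (2*j+1) = 2*(i+j+1) := by omega
    rw [this] at hconv
    rw [← Nat.cast_sum, hsub, hodd, hconv, hcat]
  have hfact : Matrix.of (fun i j : Fin n => (catalan ((i : ℕ) + j + 1) : ℤ))
      = L * L.transpose := by
    ext i j
    rw [Matrix.mul_apply]
    simp only [hL, Matrix.of_apply, Matrix.transpose_apply]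
    rw [Fin.sum_univ_eq_sum_range (fun k => ((cp (2*(i:ℕ)+1) (2*k+1) : ℤ)
      * (cp (2*(j:ℕ)+1) (2*k+1) : ℤ))) n]
    rw [key i j i.isLt j.isLt]
    push_cast
    rfl
  have htri : L.BlockTriangular OrderDual.toDual := by
    intro i j hij
    have : (i : ℕ) < (j : ℕ) := hij
    simp only [hL, Matrix.of_apply]
    rw [cp_zero_of_lt (2*(i:ℕ)+1) (2*(j:ℕ)+1) (by omega)]
    norm_num
  have hdet : L.det = 1 := by
    rw [Matrix.det_of_lowerTriangular L htri]
    apply Finset.prod_eq_one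
    intro i _
    simp only [hL, Matrix.of_apply]
    rw [cp_diag]
    norm_num
  rw [hfact, Matrix.det_mul, Matrix.det_transpose, hdet]
  norm_num
end

section
/- For every positive integer n, det_{0≤i,j≤n-1}(C_{i+j+2}) = n+1. -/
/-! Let `b(m, h) = ballotPaths m h` count the `±1` walks of length `m` from `0` to `h` that never
go below `0`, so that `b(2p, 0) = C_p`. Cutting a Dyck path of length `2(i+j+2)` at its
midpoint gives `C_{i+j+2} = ∑_{h ≤ n} b(2i+2, 2h) b(2j+2, 2h)`. Since
`b(2i+2, 2k+2) = b(2i+1, 2k+1) + b(2i+1, 2k+3)`, the column `h = 0` is the telescoping alternating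
sum `∑_k (-1)^k b(2i+2, 2k+2)` of the others. So with the unitriangular `K i k = b(2i+2, 2k+2)`
and `c k = (-1)^k` the Hankel matrix is `K (1 + c cᵀ) Kᵀ`, of determinant `1 + c ⬝ c = n + 1` by
the matrix determinant lemma. -/

open Finset Matrix

def ballotPaths : ℕ → ℕ → ℕ
  | 0, 0 => 1
  | 0, _ + 1 => 0
  | m + 1, 0 => ballotPaths m 1
  | m + 1, h + 1 => ballotPaths m h + ballotPaths m (h + 2)

lemma ballotPaths_zero (h : ℕ) : ballotPaths 0 h = if h = 0 then 1 else 0 := by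
  cases h <;> rfl

lemma ballotPaths_succ_zero (m : ℕ) : ballotPaths (m + 1) 0 = ballotPaths m 1 := rfl

lemma ballotPaths_succ_succ (m h : ℕ) :
    ballotPaths (m + 1) (h + 1) = ballotPaths m h + ballotPaths m (h + 2) := rfl

lemma ballotPaths_eq_zero_of_lt {m h : ℕ} (hmh : m < h) : ballotPaths m h = 0 := by
  induction m generalizing h with
  | zero => obtain ⟨h, rfl⟩ := Nat.exists_eq_add_one.mpr hmh; rfl
  | succ m ih =>
    obtain ⟨h, rfl⟩ := Nat.exists_eq_add_one.mpr (Nat.zero_lt_of_lt hmh)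
    rw [ballotPaths_succ_succ, ih (by omega), ih (by omega)]

lemma ballotPaths_self (m : ℕ) : ballotPaths m m = 1 := by
  induction m with
  | zero => rfl
  | succ m ih => rw [ballotPaths_succ_succ, ih, ballotPaths_eq_zero_of_lt (by omega)]

lemma ballotPaths_eq_zero_of_odd {m h : ℕ} (hodd : (m + h) % 2 = 1) : ballotPaths m h = 0 := by
  induction m generalizing h with
  | zero => rw [ballotPaths_zero, if_neg (by omega)]
  | succ m ih =>
    cases h with
    | zero => exact ih (by omega)
    | succ h => rw [ballotPaths_succ_succ, ih (by omega), ih (by omega)]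

-- The ballot formula: by Pascal's rule the right-hand side obeys the recurrence of `ballotPaths`.
lemma ballotPaths_add_two_mul (h t : ℕ) :
    (ballotPaths (h + 2 * t) h : ℤ)
      = (h + 2 * t).choose (h + t) - (h + 2 * t).choose (h + t + 1) := by
  induction t generalizing h with
  | zero => simp [ballotPaths_self, Nat.choose_succ_self]
  | succ t ih =>
    induction h with
    | zero =>
      have ih1 := ih 1
      rw [show 1 + 2 * t = 2 * t + 1 by ring] at ih1
      rw [show 0 + 2 * (t + 1) = 2 * t + 1 + 1 by ring, ballotPaths_succ_zero, ih1,
        show 0 + (t + 1) = t + 1 by ring, Nat.choose_succ_succ' _ (t + 1),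
        Nat.choose_succ_succ' _ t, ← Nat.choose_symm_half]
      push_cast
      ring_nf
    | succ h ihh =>
      have ih2 := ih (h + 2)
      rw [show h + 2 + 2 * t = h + 2 * (t + 1) by ring] at ih2
      rw [show h + 1 + 2 * (t + 1) = h + 2 * (t + 1) + 1 by ring, ballotPaths_succ_succ]
      push_cast
      rw [ihh, ih2, show h + 1 + (t + 1) = h + (t + 1) + 1 by ring, Nat.choose_succ_succ',
        Nat.choose_succ_succ']
      push_cast
      ring_nf

lemma ballotPaths_two_mul_zero (p : ℕ) : ballotPaths (2 * p) 0 = catalan p := by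
  have hcentral : ((p : ℤ) + 1) * catalan p = (2 * p).choose p := by
    exact_mod_cast Nat.centralBinom_eq_two_mul_choose p ▸ succ_mul_catalan_eq_centralBinom p
  have hnext : ((2 * p).choose (p + 1) : ℤ) * (p + 1) = (2 * p).choose p * p := by
    have h := Nat.choose_succ_right_eq (2 * p) p
    rw [show 2 * p - p = p by omega] at h
    exact_mod_cast h
  have hclosed := ballotPaths_add_two_mul 0 p
  simp only [zero_add] at hclosed
  suffices ((p : ℤ) + 1) * ballotPaths (2 * p) 0 = ((p : ℤ) + 1) * catalan p by
    exact_mod_cast mul_left_cancel₀ (by positivity) this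
  rw [hclosed]
  linear_combination -hcentral - hnext

-- The right-hand side is symmetric in `f` and `ballotPaths m`: the step operator is self-adjoint.
lemma sum_mul_ballotPaths_succ (f : ℕ → ℕ) (m M : ℕ) (hf : f M = 0) :
    ∑ h ∈ range (M + 1), f h * ballotPaths (m + 1) h
      = ∑ k ∈ range M, (f k * ballotPaths m (k + 1) + f (k + 1) * ballotPaths m k) := by
  have hshift : ∑ k ∈ range (M + 1), f k * ballotPaths m (k + 1)
      = ∑ k ∈ range M, f (k + 1) * ballotPaths m (k + 2) + f 0 * ballotPaths m 1 :=
    sum_range_succ' _ _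
  rw [sum_range_succ, hf, zero_mul, add_zero] at hshift
  rw [sum_range_succ', sum_add_distrib, hshift]
  simp only [ballotPaths_succ_succ, ballotPaths_succ_zero, mul_add, sum_add_distrib]
  ring

theorem sum_ballotPaths_mul_ballotPaths_of_add_lt {p q M : ℕ} (hM : p + q < M) :
    ∑ h ∈ range M, ballotPaths p h * ballotPaths q h = ballotPaths (p + q) 0 := by
  induction q generalizing p with
  | zero => simp [ballotPaths_zero, sum_ite_eq', show 0 < M by omega]
  | succ q ih =>
    obtain ⟨M, rfl⟩ := Nat.exists_eq_add_one.mpr (show 0 < M by omega)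
    have hswap : ∑ h ∈ range (M + 1), ballotPaths p h * ballotPaths (q + 1) h
        = ∑ h ∈ range (M + 1), ballotPaths (p + 1) h * ballotPaths q h := by
      simp only [mul_comm (ballotPaths (p + 1) _)]
      rw [sum_mul_ballotPaths_succ _ _ _ (ballotPaths_eq_zero_of_lt (by omega)),
        sum_mul_ballotPaths_succ _ _ _ (ballotPaths_eq_zero_of_lt (by omega))]
      exact sum_congr rfl fun k _ => by ring
    rw [hswap, ih (by omega), add_right_comm, add_assoc]

theorem sum_ballotPaths_mul_ballotPaths {p q M : ℕ} (hM : p < M) :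
    ∑ h ∈ range M, ballotPaths p h * ballotPaths q h = ballotPaths (p + q) 0 := by
  have hvanish : ∀ h ≥ p + 1, ballotPaths p h * ballotPaths q h = 0 := fun h hh => by
    rw [ballotPaths_eq_zero_of_lt hh, zero_mul]
  rw [eventually_constant_sum hvanish hM,
    ← eventually_constant_sum hvanish (show p + 1 ≤ p + q + 1 by omega),
    sum_ballotPaths_mul_ballotPaths_of_add_lt (Nat.lt_add_one _)]

lemma sum_range_two_mul {M : Type*} [AddCommMonoid M] (f : ℕ → M) (N : ℕ) :
    ∑ h ∈ range (2 * N), f h = ∑ k ∈ range N, (f (2 * k) + f (2 * k + 1)) := by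
  induction N with
  | zero => simp
  | succ N ih => rw [mul_add_one, sum_range_succ, sum_range_succ, sum_range_succ, ih, add_assoc]

lemma catalan_add_eq_sum_ballotPaths {a b N : ℕ} (ha : a ≤ N) :
    catalan (a + b)
      = ∑ k ∈ range (N + 1), ballotPaths (2 * a) (2 * k) * ballotPaths (2 * b) (2 * k) := by
  have hodd (k : ℕ) : ballotPaths (2 * a) (2 * k + 1) = 0 := ballotPaths_eq_zero_of_odd (by omega)
  rw [← ballotPaths_two_mul_zero, mul_add,
    ← sum_ballotPaths_mul_ballotPaths (show 2 * a < 2 * (N + 1) by omega), sum_range_two_mul]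
  simp only [hodd, zero_mul, add_zero]

lemma sum_range_neg_one_pow_mul_add {R : Type*} [CommRing R] (a : ℕ → R) (N : ℕ) :
    ∑ k ∈ range N, (-1) ^ k * (a k + a (k + 1)) = a 0 - (-1) ^ N * a N := by
  have htelescope := sum_range_sub' (fun k => (-1) ^ k * a k) N
  rw [pow_zero, one_mul] at htelescope
  rw [← htelescope]
  exact sum_congr rfl fun k _ => by ring

lemma ballotPaths_two_mul_zero_eq_alternating_sum {i N : ℕ} (hi : i < N) :
    (ballotPaths (2 * (i + 1)) 0 : ℤ)
      = ∑ k ∈ range N, (-1) ^ k * (ballotPaths (2 * (i + 1)) (2 * (k + 1)) : ℤ) := by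
  have hsplit (k : ℕ) : ballotPaths (2 * (i + 1)) (2 * (k + 1))
      = ballotPaths (2 * i + 1) (2 * k + 1) + ballotPaths (2 * i + 1) (2 * (k + 1) + 1) := rfl
  simp only [hsplit, Nat.cast_add]
  rw [sum_range_neg_one_pow_mul_add (fun k => (ballotPaths (2 * i + 1) (2 * k + 1) : ℤ)),
    ballotPaths_eq_zero_of_lt (show 2 * i + 1 < 2 * N + 1 by omega)]
  simp only [Nat.cast_zero, mul_zero, sub_zero]
  rfl

def ballotMatrix (n : ℕ) : Matrix (Fin n) (Fin n) ℤ :=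
  of fun i k => ballotPaths (2 * ((i : ℕ) + 1)) (2 * ((k : ℕ) + 1))

lemma det_ballotMatrix (n : ℕ) : (ballotMatrix n).det = 1 := by
  rw [det_of_isLowerTriangular _ fun i k hik => by
    simp only [ballotMatrix, of_apply]
    rw [ballotPaths_eq_zero_of_lt (by rw [OrderDual.toDual_lt_toDual, Fin.lt_def] at hik; omega),
      Nat.cast_zero]]
  simp [ballotMatrix, ballotPaths_self]

def alternatingSigns (n : ℕ) : Fin n → ℤ := fun k => (-1) ^ (k : ℕ)

lemma ballotMatrix_mulVec_alternatingSigns (n : ℕ) :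
    ballotMatrix n *ᵥ alternatingSigns n
      = fun i : Fin n => (ballotPaths (2 * ((i : ℕ) + 1)) 0 : ℤ) := by
  ext i
  rw [ballotPaths_two_mul_zero_eq_alternating_sum i.isLt, mulVec, dotProduct,
    ← Fin.sum_univ_eq_sum_range fun k => (-1) ^ k * (ballotPaths (2 * (i + 1)) (2 * (k + 1)) : ℤ)]
  exact sum_congr rfl fun k _ => mul_comm _ _

lemma alternatingSigns_dotProduct_self (n : ℕ) :
    alternatingSigns n ⬝ᵥ alternatingSigns n = n := by
  simp [alternatingSigns, dotProduct, ← mul_pow]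

lemma Matrix.mul_one_add_vecMulVec_mul_transpose {m n R : Type*} [Fintype n] [DecidableEq n]
    [CommRing R] (A : Matrix m n R) (v : n → R) :
    A * (1 + vecMulVec v v) * Aᵀ = A * Aᵀ + vecMulVec (A *ᵥ v) (A *ᵥ v) := by
  rw [Matrix.mul_add, Matrix.mul_one, Matrix.add_mul, mul_vecMulVec, vecMulVec_mul,
    vecMul_transpose]

lemma catalan_hankel_eq_ballotMatrix_mul (n : ℕ) :
    of (fun i j : Fin n => (catalan ((i : ℕ) + j + 2) : ℤ))
      = ballotMatrix n * (1 + vecMulVec (alternatingSigns n) (alternatingSigns n))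
        * (ballotMatrix n)ᵀ := by
  rw [mul_one_add_vecMulVec_mul_transpose, ballotMatrix_mulVec_alternatingSigns]
  ext i j
  rw [Matrix.add_apply, mul_apply, vecMulVec_apply, of_apply,
    show (i : ℕ) + j + 2 = (i + 1) + (j + 1) by ring,
    catalan_add_eq_sum_ballotPaths (show (i : ℕ) + 1 ≤ n by omega), sum_range_succ',
    ← Fin.sum_univ_eq_sum_range]
  simp [ballotMatrix]

theorem hankel_catalan_shift2_general (n : ℕ) :
    Matrix.det (Matrix.of (fun i j : Fin n => (catalan ((i : ℕ) + j + 2) : ℤ))) = n + 1 := by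
  rw [catalan_hankel_eq_ballotMatrix_mul, det_mul, det_mul, det_transpose, det_ballotMatrix,
    vecMulVec_eq Unit, det_one_add_replicateCol_mul_replicateRow, alternatingSigns_dotProduct_self,
    one_mul, mul_one, add_comm]

theorem hankel_catalan_shift2 (n : ℕ) (hn : 0 < n) :
    Matrix.det (Matrix.of (fun i j : Fin n => (catalan ((i : ℕ) + j + 2) : ℤ))) = n + 1 :=
  hankel_catalan_shift2_general n
end

section
/- For every positive integer n, det_{0≤i,j≤n-1}(C_{i+j+3}) = ((n+1)(n+2)(2n+3))/6. -/
/-- truncated binomial coefficient with integer lower index -/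
noncomputable def hcBB (m : ℕ) (j : ℤ) : ℚ :=
  if 0 ≤ j then (m.choose j.toNat : ℚ) else 0

/-- ballot numbers: nonneg paths of length 2i+1 ending at height 2k+1 -/
noncomputable def hcG (i : ℕ) (k : ℤ) : ℚ :=
  hcBB (2 * i + 1) (i - k) - hcBB (2 * i + 1) (i - k - 1)

lemma hcBB_neg {m : ℕ} {j : ℤ} (h : j < 0) : hcBB m j = 0 := by
  simp [hcBB, not_le.mpr h]

lemma hcBB_ofNat (m k : ℕ) : hcBB m (k : ℤ) = (m.choose k : ℚ) := by
  simp [hcBB]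

lemma hcBB_zero_of_lt {m : ℕ} {j : ℤ} (h : (m : ℤ) < j) : hcBB m j = 0 := by
  have h0 : 0 ≤ j := le_of_lt (lt_of_le_of_lt (by positivity) h)
  rw [hcBB, if_pos h0]
  have : m < j.toNat := by omega
  simp [Nat.choose_eq_zero_of_lt this]

lemma hcBB_pascal (m : ℕ) (j : ℤ) : hcBB (m + 1) j = hcBB m j + hcBB m (j - 1) := by
  rcases j with k | k
  · rcases k with _ | k
    · show hcBB (m+1) ((0:ℕ):ℤ) = hcBB m ((0:ℕ):ℤ) + hcBB m (((0:ℕ):ℤ) - 1)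
      rw [hcBB_ofNat, hcBB_ofNat, hcBB_neg (by norm_num)]
      simp
    · show hcBB (m+1) ((k+1:ℕ):ℤ) = hcBB m ((k+1:ℕ):ℤ) + hcBB m (((k+1:ℕ):ℤ) - 1)
      have h1 : ((k+1:ℕ):ℤ) - 1 = ((k:ℕ):ℤ) := by push_cast; ring
      rw [h1, hcBB_ofNat, hcBB_ofNat, hcBB_ofNat, Nat.choose_succ_succ']
      push_cast; ring
  · have h1 : Int.negSucc k < 0 := Int.negSucc_lt_zero k
    rw [hcBB_neg h1, hcBB_neg h1, hcBB_neg (by omega)]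
    ring

lemma hcBB_symm (m : ℕ) (j : ℤ) : hcBB m j = hcBB m ((m : ℤ) - j) := by
  rcases lt_or_ge j 0 with h | h
  · rw [hcBB_neg h, hcBB_zero_of_lt (by omega)]
  · rcases le_or_gt j m with h2 | h2
    · rw [hcBB, if_pos h, hcBB, if_pos (by omega)]
      have hj : j = (j.toNat : ℤ) := by omega
      have : ((m : ℤ) - j).toNat = m - j.toNat := by omega
      rw [this]
      rw [Nat.choose_symm (by omega)]
    · rw [hcBB_zero_of_lt h2, hcBB_neg (by omega)]


lemma hcG_rec (i : ℕ) (k : ℤ) :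
    hcG (i + 1) k = hcG i (k - 1) + 2 * hcG i k + hcG i (k + 1) := by
  show hcBB (2*(i+1)+1) ((i+1 : ℕ) - k) - hcBB (2*(i+1)+1) ((i+1 : ℕ) - k - 1) = _
  rw [show 2*(i+1)+1 = 2*i+1+1+1 by ring]
  unfold hcG
  simp only [hcBB_pascal]
  push_cast
  ring_nf

lemma hcG_neg_one (i : ℕ) : hcG i (-1) = 0 := by
  unfold hcG
  rw [show (i:ℤ) - (-1) - 1 = ((i : ℕ) : ℤ) by norm_num,
      show (i:ℤ) - (-1) = ((i + 1 : ℕ) : ℤ) by push_cast; ring]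
  rw [hcBB_ofNat, hcBB_ofNat]
  rw [show (2*i+1).choose (i+1) = (2*i+1).choose i by
    rw [← Nat.choose_symm (by omega)]; congr 1; omega]
  ring

lemma hcG_zero_of_lt {i : ℕ} {k : ℤ} (h : (i : ℤ) < k) : hcG i k = 0 := by
  unfold hcG
  rw [hcBB_neg (by omega), hcBB_neg (by omega)]
  ring

lemma hcG_diag (i : ℕ) : hcG i i = 1 := by
  unfold hcG
  rw [show (i:ℤ) - i = ((0:ℕ):ℤ) by push_cast; ring, hcBB_ofNat,
    hcBB_neg (by omega)]
  simp

lemma hcG_catalan (i : ℕ) : hcG i 0 = (catalan (i + 1) : ℚ) := by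
  rcases i with _ | s
  · rw [show hcG 0 0 = 1 from hcG_diag 0]; simp
  · unfold hcG
    rw [show ((s+1:ℕ) : ℤ) - 0 - 1 = ((s : ℕ) : ℤ) by push_cast; ring,
        show ((s+1:ℕ) : ℤ) - 0 = ((s + 1 : ℕ) : ℤ) by ring]
    rw [hcBB_ofNat, hcBB_ofNat]
    have h1 : (s + 3) * catalan (s + 2) = (2 * s + 4).choose (s + 2) := by
      have := succ_mul_catalan_eq_centralBinom (s + 2)
      rwa [Nat.centralBinom_eq_two_mul_choose, show 2*(s+2) = 2*s+4 by ring,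
        show s + 2 + 1 = s + 3 by ring] at this
    have h2 : (2 * s + 4).choose (s + 2) = 2 * (2 * s + 3).choose (s + 1) := by
      rw [show 2*s+4 = (2*s+3)+1 by ring, show s+2 = (s+1)+1 by ring,
        Nat.choose_succ_succ]
      rw [show (2*s+3).choose (s+2) = (2*s+3).choose (s+1) by
        rw [← Nat.choose_symm (by omega)]; congr 1; omega]
      ring
    have h3 : (2 * s + 3).choose (s + 1) * (s + 1) = (2 * s + 3).choose s * (s + 3) := by
      have := Nat.choose_succ_right_eq (2*s+3) s
      rwa [show 2*s+3-s = s+3 by omega] at this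
    have hq1 : ((s:ℚ) + 3) * (catalan (s + 2) : ℚ) = 2 * ((2*s+3).choose (s+1) : ℚ) := by
      exact_mod_cast h1.trans h2
    have hq2 : ((2*s+3).choose (s+1) : ℚ) * ((s:ℚ)+1) = ((2*s+3).choose s : ℚ) * ((s:ℚ)+3) := by
      exact_mod_cast h3
    have hne : ((s:ℚ) + 3) ≠ 0 := by positivity
    have goal' : ((s:ℚ) + 3) * (((2*(s+1)+1).choose (s+1) : ℚ) - ((2*(s+1)+1).choose s : ℚ))
        = ((s:ℚ) + 3) * (catalan (s + 1 + 1) : ℚ) := by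
      rw [show 2*(s+1)+1 = 2*s+3 by ring, show s+1+1 = s+2 by ring]
      linear_combination hq2 - hq1
    exact mul_left_cancel₀ hne goal'

open Finset in
lemma hcS_step (M i j : ℕ) (hi : i + 1 ≤ M) :
    ∑ k ∈ Finset.range (M+1), hcG (i+1) k * hcG j k
      = ∑ k ∈ Finset.range (M+1), hcG i k * hcG (j+1) k := by
  have hiM : (i:ℤ) < M := by exact_mod_cast hi
  have hiM1 : (i:ℤ) < (M:ℤ)+1 := by omega
  have hA : ∑ k ∈ Finset.range (M+1), hcG i ((k:ℤ)-1) * hcG j k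
      = ∑ k ∈ Finset.range (M+1), hcG i k * hcG j ((k:ℤ)+1) := by
    rw [Finset.sum_range_succ' (fun k => hcG i ((k:ℤ)-1) * hcG j k) M,
        Finset.sum_range_succ (fun k => hcG i k * hcG j ((k:ℤ)+1)) M]
    rw [show ((0:ℕ):ℤ) - 1 = (-1:ℤ) by norm_num, hcG_neg_one, hcG_zero_of_lt hiM]
    simp only [zero_mul, mul_zero, add_zero]
    refine Finset.sum_congr rfl fun k _ => ?_
    push_cast
    ring_nf
  have hB : ∑ k ∈ Finset.range (M+1), hcG i ((k:ℤ)+1) * hcG j k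
      = ∑ k ∈ Finset.range (M+1), hcG i k * hcG j ((k:ℤ)-1) := by
    rw [Finset.sum_range_succ' (fun k => hcG i k * hcG j ((k:ℤ)-1)) M,
        Finset.sum_range_succ (fun k => hcG i ((k:ℤ)+1) * hcG j k) M]
    rw [show ((0:ℕ):ℤ) - 1 = (-1:ℤ) by norm_num, hcG_neg_one, hcG_zero_of_lt hiM1]
    simp only [zero_mul, mul_zero, add_zero]
    refine Finset.sum_congr rfl fun k _ => ?_
    push_cast
    ring_nf
  calc ∑ k ∈ Finset.range (M+1), hcG (i+1) k * hcG j k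
      = ∑ k ∈ Finset.range (M+1),
          (hcG i ((k:ℤ)-1) * hcG j k + 2 * (hcG i k * hcG j k) + hcG i ((k:ℤ)+1) * hcG j k) := by
        refine Finset.sum_congr rfl fun k _ => ?_
        rw [hcG_rec]; ring
    _ = (∑ k ∈ Finset.range (M+1), hcG i ((k:ℤ)-1) * hcG j k)
        + 2 * (∑ k ∈ Finset.range (M+1), hcG i k * hcG j k)
        + ∑ k ∈ Finset.range (M+1), hcG i ((k:ℤ)+1) * hcG j k := by
        rw [Finset.sum_add_distrib, Finset.sum_add_distrib, Finset.mul_sum]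
    _ = (∑ k ∈ Finset.range (M+1), hcG i k * hcG j ((k:ℤ)+1))
        + 2 * (∑ k ∈ Finset.range (M+1), hcG i k * hcG j k)
        + ∑ k ∈ Finset.range (M+1), hcG i k * hcG j ((k:ℤ)-1) := by
        rw [hA, hB]
    _ = ∑ k ∈ Finset.range (M+1), hcG i k * hcG (j+1) k := by
        rw [Finset.mul_sum, ← Finset.sum_add_distrib, ← Finset.sum_add_distrib]
        refine Finset.sum_congr rfl fun k _ => ?_
        rw [hcG_rec]; ring

lemma hcS_descend (M : ℕ) : ∀ i, i ≤ M → ∀ j,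
    ∑ k ∈ Finset.range (M+1), hcG i k * hcG j k
      = ∑ k ∈ Finset.range (M+1), hcG 0 k * hcG (i+j) k := by
  intro i
  induction i with
  | zero => intro _ j; simp
  | succ i ih =>
    intro hi j
    rw [hcS_step M i j (by omega), ih (by omega) (j+1),
      show i + (j+1) = i+1+j from by omega]

lemma hcS_base (M m : ℕ) :
    ∑ k ∈ Finset.range (M+1), hcG 0 k * hcG m k = (catalan (m+1) : ℚ) := by
  rw [Finset.sum_range_succ' (fun k => hcG 0 k * hcG m k) M]
  have h0 : ∀ k ∈ Finset.range M, hcG 0 ((k+1 : ℕ):ℤ) * hcG m ((k+1:ℕ):ℤ) = 0 := by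
    intro k _
    rw [hcG_zero_of_lt (show ((0:ℕ):ℤ) < ((k+1:ℕ):ℤ) by push_cast; omega), zero_mul]
  rw [Finset.sum_congr rfl h0, Finset.sum_const_zero, zero_add]
  rw [show ((0:ℕ):ℤ) = (0:ℤ) by norm_num]
  rw [show hcG 0 0 = 1 from hcG_diag 0, one_mul, hcG_catalan]

lemma hcS_main (M i j : ℕ) (hi : i ≤ M) :
    ∑ k ∈ Finset.range (M+1), hcG i k * hcG j k = (catalan (i+j+1) : ℚ) := by
  rw [hcS_descend M i hi j, hcS_base]

noncomputable def hcU (k : ℤ) : ℚ := ((k : ℚ) + 1) * (-1) ^ k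

lemma hcU_neg_one : hcU (-1) = 0 := by simp [hcU]

lemma hcU_rec (k : ℤ) : hcU (k-1) + 2 * hcU k + hcU (k+1) = 0 := by
  unfold hcU
  have h1 : ((-1 : ℚ)) ^ (k+1) = -(-1:ℚ)^k := by
    rw [zpow_add₀ (by norm_num : (-1:ℚ) ≠ 0)]; ring_nf
  have h2 : ((-1 : ℚ)) ^ (k-1) = -(-1:ℚ)^k := by
    rw [zpow_sub₀ (by norm_num : (-1:ℚ) ≠ 0)]; ring_nf
  rw [h1, h2]
  push_cast
  ring

lemma hcT_succ (M i : ℕ) (hi : i + 1 ≤ M) :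
    ∑ k ∈ Finset.range (M+1), hcG (i+1) k * hcU k = 0 := by
  have hiM : (i:ℤ) < M := by exact_mod_cast hi
  have hiM1 : (i:ℤ) < (M:ℤ)+1 := by omega
  have hA : ∑ k ∈ Finset.range (M+1), hcG i ((k:ℤ)-1) * hcU k
      = ∑ k ∈ Finset.range (M+1), hcG i k * hcU ((k:ℤ)+1) := by
    rw [Finset.sum_range_succ' (fun k => hcG i ((k:ℤ)-1) * hcU k) M,
        Finset.sum_range_succ (fun k => hcG i k * hcU ((k:ℤ)+1)) M]
    rw [show ((0:ℕ):ℤ) - 1 = (-1:ℤ) by norm_num, hcG_neg_one, hcG_zero_of_lt hiM]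
    simp only [zero_mul, mul_zero, add_zero]
    refine Finset.sum_congr rfl fun k _ => ?_
    push_cast
    ring_nf
  have hB : ∑ k ∈ Finset.range (M+1), hcG i ((k:ℤ)+1) * hcU k
      = ∑ k ∈ Finset.range (M+1), hcG i k * hcU ((k:ℤ)-1) := by
    rw [Finset.sum_range_succ' (fun k => hcG i k * hcU ((k:ℤ)-1)) M,
        Finset.sum_range_succ (fun k => hcG i ((k:ℤ)+1) * hcU k) M]
    rw [show ((0:ℕ):ℤ) - 1 = (-1:ℤ) by norm_num, hcU_neg_one, hcG_zero_of_lt hiM1]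
    simp only [zero_mul, mul_zero, add_zero]
    refine Finset.sum_congr rfl fun k _ => ?_
    push_cast
    ring_nf
  calc ∑ k ∈ Finset.range (M+1), hcG (i+1) k * hcU k
      = ∑ k ∈ Finset.range (M+1),
          (hcG i ((k:ℤ)-1) * hcU k + 2 * (hcG i k * hcU k) + hcG i ((k:ℤ)+1) * hcU k) := by
        refine Finset.sum_congr rfl fun k _ => ?_
        rw [hcG_rec]; ring
    _ = (∑ k ∈ Finset.range (M+1), hcG i ((k:ℤ)-1) * hcU k)
        + 2 * (∑ k ∈ Finset.range (M+1), hcG i k * hcU k)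
        + ∑ k ∈ Finset.range (M+1), hcG i ((k:ℤ)+1) * hcU k := by
        rw [Finset.sum_add_distrib, Finset.sum_add_distrib, Finset.mul_sum]
    _ = (∑ k ∈ Finset.range (M+1), hcG i k * hcU ((k:ℤ)+1))
        + 2 * (∑ k ∈ Finset.range (M+1), hcG i k * hcU k)
        + ∑ k ∈ Finset.range (M+1), hcG i k * hcU ((k:ℤ)-1) := by
        rw [hA, hB]
    _ = ∑ k ∈ Finset.range (M+1), hcG i k *
          (hcU ((k:ℤ)-1) + 2 * hcU k + hcU ((k:ℤ)+1)) := by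
        rw [Finset.mul_sum, ← Finset.sum_add_distrib, ← Finset.sum_add_distrib]
        refine Finset.sum_congr rfl fun k _ => ?_
        ring
    _ = 0 := by
        rw [← Finset.sum_const_zero (s := Finset.range (M+1))]
        refine Finset.sum_congr rfl fun k _ => ?_
        rw [hcU_rec, mul_zero]

lemma hcT_zero (M : ℕ) :
    ∑ k ∈ Finset.range (M+1), hcG 0 k * hcU k = 1 := by
  rw [Finset.sum_range_succ' (fun k => hcG 0 k * hcU k) M]
  have h0 : ∀ k ∈ Finset.range M, hcG 0 ((k+1 : ℕ):ℤ) * hcU ((k+1:ℕ):ℤ) = 0 := by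
    intro k _
    rw [hcG_zero_of_lt (show ((0:ℕ):ℤ) < ((k+1:ℕ):ℤ) by push_cast; omega), zero_mul]
  rw [Finset.sum_congr rfl h0, Finset.sum_const_zero, zero_add]
  rw [show ((0:ℕ):ℤ) = (0:ℤ) by norm_num]
  rw [show hcG 0 0 = 1 from hcG_diag 0, one_mul]
  simp [hcU]

open Matrix in
lemma hc_sq_sum : ∀ M : ℕ, ∑ k ∈ Finset.range M, ((k:ℚ)+1)^2 = (M:ℚ)*((M:ℚ)+1)*(2*(M:ℚ)+1)/6 := by
  intro M
  induction M with
  | zero => simp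
  | succ M ih =>
    rw [Finset.sum_range_succ, ih]
    push_cast
    ring

open Matrix in
theorem hankel_catalan_shift3 (n : ℕ) (hn : 0 < n) :
    Matrix.det (Matrix.of (fun i j : Fin n => (catalan ((i : ℕ) + j + 3) : ℚ))) =
      ((n + 1) * (n + 2) * (2 * n + 3)) / 6 := by
  obtain ⟨m, rfl⟩ : ∃ m, n = m + 1 := ⟨n-1, by omega⟩
  clear hn
  set B : Matrix (Fin (m+2)) (Fin (m+2)) ℚ :=
    Matrix.of (fun i k : Fin (m+2) => hcG (i:ℕ) ((k:ℕ):ℤ)) with hBdef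
  set H : Matrix (Fin (m+2)) (Fin (m+2)) ℚ :=
    Matrix.of (fun i j : Fin (m+2) => (catalan ((i:ℕ)+(j:ℕ)+1) : ℚ)) with hHdef
  have hBtri : ∀ i j : Fin (m+2), (i:ℕ) < (j:ℕ) → B i j = 0 := by
    intro i j hij
    simp only [hBdef, Matrix.of_apply]
    exact hcG_zero_of_lt (by exact_mod_cast hij)
  have hBdet : B.det = 1 := by
    rw [Matrix.det_of_lowerTriangular B (by
      intro i j hij
      exact hBtri i j (by exact_mod_cast hij))]
    rw [Finset.prod_eq_one]
    intro i _
    simp only [hBdef, Matrix.of_apply]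
    exact hcG_diag i
  have hH : H = B * Bᵀ := by
    ext i j
    rw [Matrix.mul_apply]
    simp only [hBdef, hHdef, Matrix.of_apply, Matrix.transpose_apply]
    rw [Fin.sum_univ_eq_sum_range (fun k => hcG (i:ℕ) (k:ℤ) * hcG (j:ℕ) (k:ℤ)) (m+2)]
    exact (hcS_main (m+1) i j (by omega)).symm
  set x : Fin (m+2) → ℚ := fun k => hcU ((k:ℕ):ℤ) with hxdef
  have hBx : B.mulVec x = Pi.single 0 1 := by
    ext i
    rw [Matrix.mulVec, dotProduct]
    simp only [hBdef, hxdef, Matrix.of_apply]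
    rw [Fin.sum_univ_eq_sum_range (fun k => hcG (i:ℕ) (k:ℤ) * hcU (k:ℤ)) (m+2)]
    induction i using Fin.cases with
    | zero =>
      rw [Pi.single_eq_same]
      exact hcT_zero (m+1)
    | succ i' =>
      rw [Pi.single_eq_of_ne (Fin.succ_ne_zero i') 1]
      exact hcT_succ (m+1) i' (by omega)
  have hBadj : B * B.adjugate = 1 := by rw [Matrix.mul_adjugate, hBdet, one_smul]
  have hadjB : B.adjugate * B = 1 := by rw [Matrix.adjugate_mul, hBdet, one_smul]
  have hcol : ∀ k, B.adjugate k 0 = x k := by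
    have h1 : B.mulVec (fun k => B.adjugate k 0) = Pi.single 0 1 := by
      ext i
      have e : B.mulVec (fun k => B.adjugate k 0) i = (B * B.adjugate) i 0 := by
        rw [Matrix.mul_apply, Matrix.mulVec, dotProduct]
      rw [e, hBadj, Matrix.one_apply]
      simp [Pi.single_apply, eq_comm]
    have hinj : ∀ v w : Fin (m+2) → ℚ, B.mulVec v = B.mulVec w → v = w := by
      intro v w h
      have h2 := congrArg (B.adjugate.mulVec) h
      rwa [Matrix.mulVec_mulVec, Matrix.mulVec_mulVec, hadjB, Matrix.one_mulVec,
        Matrix.one_mulVec] at h2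
    exact congrFun (hinj _ _ (h1.trans hBx.symm))
  have hadjH : H.adjugate 0 0 = ∑ k : Fin (m+2), (x k)^2 := by
    rw [hH, Matrix.adjugate_mul_distrib, Matrix.mul_apply]
    refine Finset.sum_congr rfl fun k _ => ?_
    rw [← Matrix.adjugate_transpose, Matrix.transpose_apply, hcol k]
    ring
  have hcof : H.adjugate 0 0 =
      Matrix.det (Matrix.of (fun i j : Fin (m+1) => (catalan ((i : ℕ) + j + 3) : ℚ))) := by
    rw [Matrix.adjugate_apply, Matrix.det_succ_row_zero]
    rw [Finset.sum_eq_single 0]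
    · rw [Matrix.updateRow_self]
      simp only [Fin.val_zero, pow_zero, one_mul, Pi.single_eq_same]
      congr 1
      ext i j
      simp only [Matrix.submatrix_apply, Fin.zero_succAbove,
        Matrix.updateRow_ne (Fin.succ_ne_zero i), hHdef, Matrix.of_apply, Fin.val_succ]
      rw [show (i:ℕ)+1+((j:ℕ)+1)+1 = (i:ℕ)+(j:ℕ)+3 from by omega]
    · intro j _ hj
      rw [Matrix.updateRow_self, Pi.single_eq_of_ne hj]
      ring
    · intro h
      exact absurd (Finset.mem_univ _) h
  rw [← hcof, hadjH]
  rw [Fin.sum_univ_eq_sum_range (fun k => (hcU (k:ℤ))^2) (m+2)]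
  have hterm : ∀ k : ℕ, (hcU (k:ℤ))^2 = ((k:ℚ)+1)^2 := by
    intro k
    unfold hcU
    rw [zpow_natCast]
    rw [mul_pow, ← pow_mul, mul_comm k 2, pow_mul]
    norm_num
  rw [Finset.sum_congr rfl (fun k _ => hterm k), hc_sq_sum (m+2)]
  push_cast
  ring
end

section
/- For every positive integer n, the 4×4 determinant det_{0≤i,j≤3} binom(i+j+n, i-j+n) equals (4/(3!·5!))·(n+1)(n+2)^2(n+3)(2n+3)(2n+5). -/
theorem binom_eq_choose_toNat_sub (a : ℕ) {b : ℤ} (hb : b ≤ a) :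
    binom a b = a.choose (a - b).toNat := by
  unfold binom
  split_ifs with h
  · rw [← Nat.choose_symm (by omega)]
    congr 1
    omega
  · exact (Nat.choose_eq_zero_of_lt (by omega)).symm

theorem binom_add_sub_add (i j n : ℕ) :
    binom (i + j + n) ((i : ℤ) - j + n) = (i + j + n).choose (2 * j) := by
  rw [binom_eq_choose_toNat_sub _ (by omega)]
  congr 1
  omega

theorem binom_det_4_general (n : ℕ) :
    Matrix.det (Matrix.of (fun i j : Fin 4 =>
        (binom ((i : ℕ) + j + n) ((i : ℤ) - (j : ℤ) + n) : ℚ))) =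
      (4 / (Nat.factorial 3 * Nat.factorial 5 : ℚ)) *
        ((n + 1) * (n + 2) ^ 2 * (n + 3) * (2 * n + 3) * (2 * n + 5)) := by
  simp only [binom_add_sub_add, Nat.cast_choose_eq_descPochhammer_div (K := ℚ)]
  simp [Matrix.det_succ_row_zero, Fin.sum_univ_succ, Fin.succAbove, descPochhammer_succ_eval,
    Nat.factorial]
  ring

theorem binom_det_4 (n : ℕ) (hn : 0 < n) :
    Matrix.det (Matrix.of (fun i j : Fin 4 =>
        (binom ((i : ℕ) + j + n) ((i : ℤ) - (j : ℤ) + n) : ℚ))) =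
      (4 / (Nat.factorial 3 * Nat.factorial 5 : ℚ)) *
        ((n + 1) * (n + 2) ^ 2 * (n + 3) * (2 * n + 3) * (2 * n + 5)) :=
  binom_det_4_general n
end

section
/- For every positive integer n, the 5×5 determinant det_{0≤i,j≤4} binom(i+j+n, i-j+n) equals (8/(5!·7!))·(n+1)(n+2)^2(n+3)^2(n+4)(2n+3)(2n+5)^2(2n+7). -/
/-!
By symmetry the entry `binom (i + j + n) (i - j + n)` is `(i + j + n).choose (2 * j)`, which is
the value at `x = n` of the polynomial `(x + i + j)(x + i + j - 1)⋯(x + i - j + 1) / (2j)!`.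
The determinant is therefore a polynomial identity in `x`, checked by cofactor expansion.
-/

open Nat

theorem binom_eq_choose (n i j : ℕ) :
    binom (i + j + n) ((i : ℤ) - j + n) = (i + j + n).choose (2 * j) := by
  unfold binom
  split_ifs with h
  · rcases le_or_gt (2 * j) (i + j + n) with h2 | h2
    · rw [← Nat.choose_symm h2]
      congr 1
      omega
    · rw [Nat.choose_eq_zero_of_lt h2, Nat.choose_eq_zero_of_lt (by omega)]
  · rw [Nat.choose_eq_zero_of_lt (by omega)]

noncomputable def binomPolyMatrix {K : Type*} [Field K] (m : ℕ) (x : K) :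
    Matrix (Fin m) (Fin m) K :=
  Matrix.of fun i j => (descPochhammer K (2 * j)).eval (x + i + j) / (2 * j : ℕ)!

theorem of_binom_eq_binomPolyMatrix {K : Type*} [Field K] [CharZero K] (m n : ℕ) :
    Matrix.of (fun i j : Fin m => (binom ((i : ℕ) + j + n) ((i : ℤ) - (j : ℤ) + n) : K)) =
      binomPolyMatrix m (n : K) := by
  ext i j
  rw [Matrix.of_apply, binom_eq_choose, Nat.cast_choose_eq_descPochhammer_div]
  simp only [binomPolyMatrix, Matrix.of_apply]
  push_cast
  ring_nf

set_option maxHeartbeats 1000000 in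
theorem det_binomPolyMatrix_five {K : Type*} [Field K] [CharZero K] (x : K) :
    (binomPolyMatrix 5 x).det = 8 / (5 ! * 7 !) *
      ((x + 1) * (x + 2) ^ 2 * (x + 3) ^ 2 * (x + 4) *
        (2 * x + 3) * (2 * x + 5) ^ 2 * (2 * x + 7)) := by
  simp [binomPolyMatrix, Matrix.det_succ_row_zero, Fin.sum_univ_succ, Fin.succAbove, Fin.castSucc,
    Fin.castAdd, Fin.castLE, descPochhammer_eval_eq_prod_range, Finset.prod_range_succ,
    Nat.factorial]
  ring

theorem binom_det_5_general (n : ℕ) :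
    Matrix.det (Matrix.of (fun i j : Fin 5 =>
        (binom ((i : ℕ) + j + n) ((i : ℤ) - (j : ℤ) + n) : ℚ))) =
      (8 / (Nat.factorial 5 * Nat.factorial 7 : ℚ)) *
        ((n + 1) * (n + 2) ^ 2 * (n + 3) ^ 2 * (n + 4) *
          (2 * n + 3) * (2 * n + 5) ^ 2 * (2 * n + 7)) := by
  rw [of_binom_eq_binomPolyMatrix, det_binomPolyMatrix_five]

theorem binom_det_5 (n : ℕ) (hn : 0 < n) :
    Matrix.det (Matrix.of (fun i j : Fin 5 =>
        (binom ((i : ℕ) + j + n) ((i : ℤ) - (j : ℤ) + n) : ℚ))) =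
      (8 / (Nat.factorial 5 * Nat.factorial 7 : ℚ)) *
        ((n + 1) * (n + 2) ^ 2 * (n + 3) ^ 2 * (n + 4) *
          (2 * n + 3) * (2 * n + 5) ^ 2 * (2 * n + 7)) :=
  binom_det_5_general n
end

section
/- For every positive integer n and nonnegative integer r, the Hankel determinant det_{0≤i,j≤n-1}(C_{i+j+r}) is a positive integer (in particular nonzero). -/
/-!
Let `ballot s h` count the walks with steps `±1` from height `0` to height `h` that stay
nonnegative. A step of the walk can be moved from one factor to the other in
`∑ₕ ballot a h * ballot c h`, so this sum is `ballot (a + c) 0`, which for `a + c = 2m` is `C_m`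
by the reflection principle. Hence the Hankel matrix is `G Gᵀ` with `G i h = ballot (2i + r) h`.
The columns `h = 2j + r` of `G` form a unitriangular block (a walk of length `s` cannot climb above
`s`, and climbs to `s` in one way only), so `G` has full row rank and `G Gᵀ` is positive definite.
-/

open Finset Matrix

def ballot : ℕ → ℕ → ℕ
  | 0, 0 => 1
  | 0, _ + 1 => 0
  | s + 1, 0 => ballot s 1
  | s + 1, h + 1 => ballot s h + ballot s (h + 2)

theorem ballot_eq_zero_of_lt : ∀ {s h : ℕ}, s < h → ballot s h = 0
  | 0, _ + 1, _ => rfl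
  | s + 1, h + 1, hs => by
    rw [ballot, ballot_eq_zero_of_lt (by omega), ballot_eq_zero_of_lt (by omega)]

theorem ballot_self : ∀ s : ℕ, ballot s s = 1
  | 0 => rfl
  | s + 1 => by rw [ballot, ballot_self, ballot_eq_zero_of_lt (by omega)]

/-- The ballot formula, with the reflected paths moved to the left so that no subtraction
occurs: paths from `0` to `h` that dip below `0` reflect to paths ending at `-h - 2`. -/
theorem ballot_add_choose : ∀ {s h k : ℕ}, s = h + 2 * k →
    ballot s h + s.choose (k + h + 1) = s.choose k
  | 0, 0, 0, _ => rfl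
  | 0, _ + 1, _, hs | 0, _, _ + 1, hs => by omega
  | s + 1, 0, 0, hs => by omega
  | s + 1, 0, k + 1, hs => by
    have ih := ballot_add_choose (s := s) (h := 1) (k := k) (by omega)
    rw [ballot, Nat.choose_succ_succ', Nat.choose_succ_succ']
    omega
  | s + 1, h + 1, 0, hs => by
    obtain rfl : s = h := by omega
    rw [ballot, ballot_self, ballot_eq_zero_of_lt (by omega), Nat.choose_eq_zero_of_lt (by omega),
      Nat.choose_zero_right]
  | s + 1, h + 1, k + 1, hs => by
    have ih₁ := ballot_add_choose (s := s) (h := h) (k := k + 1) (by omega)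
    have ih₂ := ballot_add_choose (s := s) (h := h + 2) (k := k) (by omega)
    rw [ballot, Nat.choose_succ_succ', show k + 1 + (h + 1) + 1 = k + h + 2 + 1 by omega,
      Nat.choose_succ_succ', show k + 1 + (h + 1) = k + h + 2 by omega]
    rw [show k + 1 + h + 1 = k + h + 2 by omega] at ih₁
    rw [show k + (h + 2) + 1 = k + h + 2 + 1 by omega] at ih₂
    omega

theorem ballot_two_mul_zero (m : ℕ) : ballot (2 * m) 0 = catalan m := by
  have hball := ballot_add_choose (s := 2 * m) (h := 0) (k := m) (by omega)
  have hcat := succ_mul_catalan_eq_centralBinom m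
  have hchoose := Nat.choose_succ_right_eq (2 * m) m
  rw [Nat.centralBinom, ← hball] at hcat
  rw [show 2 * m - m = m by omega, ← hball] at hchoose
  apply Nat.eq_of_mul_eq_mul_left m.succ_pos
  nlinarith

/-- One step of the walk is self-adjoint: it may be moved from one factor to the other. -/
theorem sum_ballot_succ_mul {a c K : ℕ} (ha : a + 1 < K) :
    ∑ h ∈ range K, ballot (a + 1) h * ballot c h = ∑ h ∈ range K, ballot a h * ballot (c + 1) h := by
  obtain ⟨L, rfl⟩ : ∃ L, K = L + 1 := ⟨K - 1, by omega⟩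
  have hf := sum_range_succ (fun h => ballot a h * ballot c (h + 1)) L
  have hf' := sum_range_succ' (fun h => ballot a h * ballot c (h + 1)) L
  have hg := sum_range_succ (fun h => ballot a (h + 1) * ballot c h) L
  have hg' := sum_range_succ' (fun h => ballot a (h + 1) * ballot c h) L
  simp only [ballot_eq_zero_of_lt (show a < L by omega),
    ballot_eq_zero_of_lt (show a < L + 1 by omega), zero_mul, add_zero] at hf hg
  simp only [zero_add, add_assoc, Nat.reduceAdd] at hf' hg'
  rw [sum_range_succ', sum_range_succ']
  simp only [ballot, add_mul, mul_add, sum_add_distrib]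
  omega

theorem sum_ballot_mul {a K : ℕ} (ha : a < K) (c : ℕ) :
    ∑ h ∈ range K, ballot a h * ballot c h = ballot (a + c) 0 := by
  induction a generalizing c with
  | zero =>
    rw [sum_eq_single_of_mem 0 (mem_range.2 ha) fun h _ hh => ?_]
    · simp [ballot]
    · obtain ⟨h, rfl⟩ := Nat.exists_eq_succ_of_ne_zero hh
      simp [ballot]
  | succ a ih =>
    rw [sum_ballot_succ_mul ha, ih (by omega), Nat.add_right_comm, Nat.add_assoc]

theorem Matrix.vecMul_injective_of_isUnit_submatrix {m n R : Type*} [Fintype m] [DecidableEq m]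
    [CommRing R] {G : Matrix m n R} (e : m → n) (h : IsUnit (G.submatrix id e)) :
    Function.Injective G.vecMul := fun x y hxy =>
  vecMul_injective_of_isUnit h <| funext fun j => by
    simpa [vecMul, dotProduct] using congrFun hxy (e j)

theorem Matrix.det_mul_transpose_pos_of_isUnit_submatrix {m n : Type*} [Fintype m]
    [DecidableEq m] [Fintype n] {G : Matrix m n ℝ} (e : m → n) (h : IsUnit (G.submatrix id e)) :
    0 < (G * Gᵀ).det := by
  rw [← conjTranspose_eq_transpose_of_trivial]
  exact (PosDef.mul_conjTranspose_self G (vecMul_injective_of_isUnit_submatrix e h)).det_pos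

theorem catalan_eq_sum_ballot_mul {K : ℕ} (i j r : ℕ) (hK : 2 * i + r < K) :
    catalan (i + j + r) = ∑ h ∈ range K, ballot (2 * i + r) h * ballot (2 * j + r) h := by
  rw [sum_ballot_mul hK, ← ballot_two_mul_zero]
  congr 1
  ring

theorem hankel_catalan_pos_general (n r : ℕ) :
    0 < Matrix.det (Matrix.of (fun i j : Fin n => (catalan ((i : ℕ) + j + r) : ℤ))) := by
  let G : Matrix (Fin n) (Fin (2 * n + r)) ℝ := of fun i h => ballot (2 * i + r) h
  let diag (j : Fin n) : Fin (2 * n + r) := ⟨2 * j + r, by omega⟩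
  have hankel_eq :
      (of fun i j : Fin n => (catalan ((i : ℕ) + j + r) : ℤ)).map ((↑) : ℤ → ℝ) = G * Gᵀ := by
    ext i j
    rw [map_apply, of_apply, catalan_eq_sum_ballot_mul (K := 2 * n + r) i j r (by omega),
      ← Fin.sum_univ_eq_sum_range]
    push_cast
    rfl
  have lower : (G.submatrix id diag).IsLowerTriangular := fun i j hij => by
    simpa [G, diag] using ballot_eq_zero_of_lt (by simp at hij; omega)
  have det_one : (G.submatrix id diag).det = 1 := by
    rw [det_of_isLowerTriangular _ lower]
    exact prod_eq_one fun i _ => by simp [G, diag, ballot_self]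
  have hpos := det_mul_transpose_pos_of_isUnit_submatrix diag
    ((isUnit_iff_isUnit_det _).2 (det_one ▸ isUnit_one))
  rw [← hankel_eq, ← Int.cast_det] at hpos
  exact_mod_cast hpos

theorem hankel_catalan_pos (n r : ℕ) (hn : 0 < n) :
    0 < Matrix.det (Matrix.of (fun i j : Fin n => (catalan ((i : ℕ) + j + r) : ℤ))) :=
  hankel_catalan_pos_general n r
end
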